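/- arXiv:2312.17333 — 10 statements merged into one kernel-verified Lean document; each statement's English description precedes it below -/
import Mathlib

section
/- Let H be a complex Hilbert space, A : H → H a bounded linear operator, and E a closed subspace of H containing the range of Im A := (A − A*)/(2i). Then there exist a complex Hilbert space G and bounded linear operators Φ : H → G and J : G → G such that J = J*, J ∘ J = I_G, (1/i)(A − A*) = Φ* ∘ J ∘ Φ, and the closure of the range of Φ* equals E. -/
noncomputable section

/-- An operator colligation `(H, G; A, Φ, J)` over the fixed internal space `H` with fundamental
operator `A`, together with the requirement that its channel subspace (the closure of the range
of `Φ*`) equals the prescribed subspace `E`. -/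
structure ColligationWithChannel
    (H : Type) [NormedAddCommGroup H] [InnerProductSpace ℂ H] [CompleteSpace H]
    (A : H →L[ℂ] H) (E : Submodule ℂ H) : Type 1 where
  G : Type
  [normG : NormedAddCommGroup G]
  [innerG : InnerProductSpace ℂ G]
  [complG : CompleteSpace G]
  Φ : H →L[ℂ] G
  J : G →L[ℂ] G
  J_selfadjoint : ContinuousLinearMap.adjoint J = J
  J_involutive : J ∘L J = ContinuousLinearMap.id ℂ G
  colligation : Complex.I⁻¹ • (A - ContinuousLinearMap.adjoint A)
      = ContinuousLinearMap.adjoint Φ ∘L (J ∘L Φ)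
  channel : (LinearMap.range (ContinuousLinearMap.adjoint Φ : G →ₗ[ℂ] H)).topologicalClosure = E

/-!
Put `B = (A - A*)/i`, which is self-adjoint with range in `E`, and let `P` be the orthogonal
projection onto `E`. Take `G = H ⊕ H` (the `ℓ²` sum), `Φ x = (P x, B x / 2)` and `J` the swap of
the two summands, a self-adjoint involution. Since `P B = B` and, taking adjoints, `B P = B`, we get
`Φ* J Φ = (P B + B P) / 2 = B`, while `Φ* (u, v) = P u + B v / 2` ranges exactly over `E`.
-/

open ContinuousLinearMap

section ProdL2

variable {𝕜 H K K₁ K₂ : Type*} [RCLike 𝕜]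
  [NormedAddCommGroup H] [InnerProductSpace 𝕜 H]
  [NormedAddCommGroup K] [InnerProductSpace 𝕜 K]
  [NormedAddCommGroup K₁] [InnerProductSpace 𝕜 K₁]
  [NormedAddCommGroup K₂] [InnerProductSpace 𝕜 K₂]

def prodL2 (S : H →L[𝕜] K₁) (T : H →L[𝕜] K₂) : H →L[𝕜] WithLp 2 (K₁ × K₂) :=
  (WithLp.prodContinuousLinearEquiv 2 𝕜 K₁ K₂).symm.toContinuousLinearMap ∘L S.prod T

@[simp]
theorem prodL2_apply (S : H →L[𝕜] K₁) (T : H →L[𝕜] K₂) (x : H) :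
    prodL2 S T x = WithLp.toLp 2 (S x, T x) :=
  rfl

variable (𝕜 K) in
def swapL2 : WithLp 2 (K × K) →L[𝕜] WithLp 2 (K × K) :=
  (LinearIsometryEquiv.withLpProdComm 2 𝕜 K K : WithLp 2 (K × K) →L[𝕜] WithLp 2 (K × K))

@[simp]
theorem swapL2_apply (g : WithLp 2 (K × K)) : swapL2 𝕜 K g = WithLp.toLp 2 (g.snd, g.fst) :=
  rfl

theorem swapL2_comp_swapL2 : swapL2 𝕜 K ∘L swapL2 𝕜 K = ContinuousLinearMap.id 𝕜 _ :=
  rfl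

variable [CompleteSpace H] [CompleteSpace K] [CompleteSpace K₁] [CompleteSpace K₂]

theorem adjoint_prodL2_apply (S : H →L[𝕜] K₁) (T : H →L[𝕜] K₂) (g : WithLp 2 (K₁ × K₂)) :
    adjoint (prodL2 S T) g = adjoint S g.fst + adjoint T g.snd :=
  ext_inner_left 𝕜 fun v => by
    simp [adjoint_inner_right, inner_add_right, WithLp.prod_inner_apply]

theorem range_adjoint_prodL2 (S : H →L[𝕜] K₁) (T : H →L[𝕜] K₂) :
    (adjoint (prodL2 S T)).range = (adjoint S).range ⊔ (adjoint T).range := by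
  ext x
  simp only [Submodule.mem_sup, LinearMap.mem_range, coe_coe, adjoint_prodL2_apply]
  constructor
  · rintro ⟨g, rfl⟩
    exact ⟨_, ⟨g.fst, rfl⟩, _, ⟨g.snd, rfl⟩, rfl⟩
  · rintro ⟨_, ⟨u, rfl⟩, _, ⟨v, rfl⟩, rfl⟩
    exact ⟨WithLp.toLp 2 (u, v), rfl⟩

theorem adjoint_swapL2 : adjoint (swapL2 𝕜 K) = swapL2 𝕜 K :=
  LinearIsometryEquiv.adjoint_eq_symm _

theorem adjoint_prodL2_comp_swapL2_comp_prodL2 (S T : H →L[𝕜] K) :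
    adjoint (prodL2 S T) ∘L swapL2 𝕜 K ∘L prodL2 S T = adjoint S ∘L T + adjoint T ∘L S := by
  ext x
  simp [adjoint_prodL2_apply]

end ProdL2

section StarProjection

variable {𝕜 H : Type*} [RCLike 𝕜] [NormedAddCommGroup H] [InnerProductSpace 𝕜 H]
  {E : Submodule 𝕜 H} [E.HasOrthogonalProjection] {B : H →L[𝕜] H}

theorem starProjection_comp_of_range_le (hBE : B.range ≤ E) : E.starProjection ∘L B = B :=
  ext fun x => Submodule.starProjection_eq_self_iff.mpr (hBE ⟨x, rfl⟩)

variable [CompleteSpace H]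

theorem comp_starProjection_of_range_le (hB : IsSelfAdjoint B) (hBE : B.range ≤ E) :
    B ∘L E.starProjection = B := by
  simpa [adjoint_comp, (isSelfAdjoint_starProjection E).adjoint_eq, hB.adjoint_eq]
    using congrArg adjoint (starProjection_comp_of_range_le hBE)

theorem adjoint_prodL2_comp_swapL2_comp_prodL2_starProjection (hB : IsSelfAdjoint B)
    (hBE : B.range ≤ E) :
    adjoint (prodL2 E.starProjection ((2⁻¹ : 𝕜) • B)) ∘L swapL2 𝕜 H ∘L
      prodL2 E.starProjection ((2⁻¹ : 𝕜) • B) = B := by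
  have hB2 : IsSelfAdjoint ((2⁻¹ : 𝕜) • B) := .smul (by simp) hB
  rw [adjoint_prodL2_comp_swapL2_comp_prodL2, (isSelfAdjoint_starProjection E).adjoint_eq,
    hB2.adjoint_eq, comp_smul, smul_comp, starProjection_comp_of_range_le hBE,
    comp_starProjection_of_range_le hB hBE, ← add_smul]
  norm_num

theorem range_adjoint_prodL2_starProjection (hB : IsSelfAdjoint B) (hBE : B.range ≤ E) :
    (adjoint (prodL2 E.starProjection ((2⁻¹ : 𝕜) • B))).range = E := by
  have hB2 : IsSelfAdjoint ((2⁻¹ : 𝕜) • B) := .smul (by simp) hB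
  rw [range_adjoint_prodL2, (isSelfAdjoint_starProjection E).adjoint_eq, hB2.adjoint_eq,
    Submodule.range_starProjection]
  exact sup_eq_left.mpr ((LinearMap.range_smul_le_range _ _).trans hBE)

end StarProjection

theorem isSelfAdjoint_inv_I_smul_sub_star {R : Type*} [AddCommGroup R] [StarAddMonoid R]
    [Module ℂ R] [StarModule ℂ R] (a : R) : IsSelfAdjoint (Complex.I⁻¹ • (a - star a)) := by
  rw [IsSelfAdjoint, star_smul, star_sub, star_star, star_inv₀, Complex.star_def, Complex.conj_I,
    inv_neg, neg_smul, ← smul_neg, neg_sub]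

/-- For any bounded operator `A` on a complex Hilbert space and any closed subspace `E`
containing the range of `Im A = (A - A*)/(2i)`, there exists a colligation with fundamental
operator `A` whose channel subspace is `E`. -/
theorem statement0
    (H : Type) [NormedAddCommGroup H] [InnerProductSpace ℂ H] [CompleteSpace H]
    (A : H →L[ℂ] H) (E : Submodule ℂ H) (hE : IsClosed (E : Set H))
    (hrange : LinearMap.range ((((2 : ℂ) * Complex.I)⁻¹ • (A - ContinuousLinearMap.adjoint A) : H →L[ℂ] H) : H →ₗ[ℂ] H) ≤ E) :
    Nonempty (ColligationWithChannel H A E) := by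
  have : CompleteSpace E := hE.completeSpace_coe
  set B : H →L[ℂ] H := Complex.I⁻¹ • (A - adjoint A)
  have hB : IsSelfAdjoint B := isSelfAdjoint_inv_I_smul_sub_star A
  have hBE : B.range ≤ E := by
    have hB_two_smul : B = (2 : ℂ) • ((2 * Complex.I)⁻¹ • (A - adjoint A)) := by
      rw [smul_smul, mul_inv, ← mul_assoc, mul_inv_cancel₀ two_ne_zero, one_mul]
    exact hB_two_smul ▸ (LinearMap.range_smul_le_range _ _).trans hrange
  exact ⟨{
    G := WithLp 2 (H × H)
    Φ := prodL2 E.starProjection ((2⁻¹ : ℂ) • B)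
    J := swapL2 ℂ H
    J_selfadjoint := adjoint_swapL2
    J_involutive := swapL2_comp_swapL2
    colligation := (adjoint_prodL2_comp_swapL2_comp_prodL2_starProjection hB hBE).symm
    channel := by
      rw [range_adjoint_prodL2_starProjection hB hBE]
      exact hE.submodule_topologicalClosure_eq }⟩
end
end

section
/- Let (H, G; A, Φ, J) be an operator colligation, H1 a closed subspace of H invariant under A (A H1 ⊆ H1), H2 = H1^⊥, and P1, P2 the orthogonal projections of H onto H1, H2. Set A1 := A restricted to H1 (as an operator H1 → H1), A2 := P2 ∘ A restricted to H2 (as an operator H2 → H2), and Φj := Φ restricted to Hj (j = 1, 2). Then: (a) (Hj, G; Aj, Φj, J) is an operator colligation for j = 1, 2; (b) P1 ∘ A ∘ P2 = i Φ1* ∘ J ∘ Φ2 ∘ P2, so that A = A1 P1 + A2 P2 + i Φ1* J Φ2 P2; and (c) for every z ∈ ρ(A1) ∩ ρ(A2), z ∈ ρ(A) and the characteristic functions satisfy S_α(z) = S_{α1}(z) ∘ S_{α2}(z), i.e., I_G − i Φ (A − z)⁻¹ Φ* J = (I_G − i Φ1 (A1 − z)⁻¹ Φ1* J) ∘ (I_G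 − i Φ2 (A2 − z)⁻¹ Φ2* J). -/
/-!
With respect to `H = K ⊕ Kᗮ` the operator `A` is block upper triangular with diagonal blocks
`A1`, `A2`. Compressing the colligation identity to either block gives (a). In the corner
`P1 A P2` the term `P1 A* P2` vanishes, since `A*` leaves `Kᗮ` invariant, so the colligation
identity turns the corner into `i Φ1* J Φ2`, which is (b). A block triangular operator whose diagonal
blocks are invertible is invertible, and its inverse has corner
`-(A1 - z)⁻¹ (i Φ1* J Φ2) (A2 - z)⁻¹`; in `S(z)` this corner produces exactly the cross term
`(i Φ1 (A1 - z)⁻¹ Φ1* J) (i Φ2 (A2 - z)⁻¹ Φ2* J)` of the product `S1(z) S2(z)`, which is (c).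
-/

noncomputable section

open ContinuousLinearMap Submodule
open scoped InnerProduct Ring

namespace ContinuousLinearMap

variable {R M : Type*} [Semiring R] [TopologicalSpace M] [AddCommMonoid M] [Module R M]

theorem apply_ringInverse_apply {T : M →L[R] M} (hT : IsUnit T) (x : M) : T (T⁻¹ʳ x) = x :=
  congr($(Ring.mul_inverse_cancel T hT) x)

theorem ringInverse_apply_apply {T : M →L[R] M} (hT : IsUnit T) (x : M) : T⁻¹ʳ (T x) = x :=
  congr($(Ring.inverse_mul_cancel T hT) x)

end ContinuousLinearMap

namespace Submodule

variable {H : Type*} [NormedAddCommGroup H] [InnerProductSpace ℂ H]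
  {K : Submodule ℂ H} [CompleteSpace K]

theorem coe_orthogonalProjectionOnto_add_coe_orthogonal (h : H) :
    (K.orthogonalProjectionOnto h : H) + Kᗮ.orthogonalProjectionOnto h = h :=
  starProjection_add_starProjection_orthogonal h

variable {T : H →L[ℂ] H} {T1 : K →L[ℂ] K} {T2 : Kᗮ →L[ℂ] Kᗮ}

theorem apply_eq_block_triangular (hT1 : ∀ x, (T1 x : H) = T x)
    (hT2 : ∀ x, T2 x = Kᗮ.orthogonalProjectionOnto (T x)) (h : H) :
    T h = T1 (K.orthogonalProjectionOnto h) + T2 (Kᗮ.orthogonalProjectionOnto h)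
      + K.orthogonalProjectionOnto (T (Kᗮ.orthogonalProjectionOnto h)) := by
  calc T h = T (K.orthogonalProjectionOnto h) + T (Kᗮ.orthogonalProjectionOnto h) := by
        rw [← map_add, coe_orthogonalProjectionOnto_add_coe_orthogonal]
    _ = T1 (K.orthogonalProjectionOnto h)
          + (K.orthogonalProjectionOnto (T (Kᗮ.orthogonalProjectionOnto h))
            + Kᗮ.orthogonalProjectionOnto (T (Kᗮ.orthogonalProjectionOnto h)) : H) := by
        rw [hT1, coe_orthogonalProjectionOnto_add_coe_orthogonal]
    _ = _ := by rw [← hT2]; abel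

theorem orthogonalProjectionOnto_apply_of_block_triangular (hT1 : ∀ x, (T1 x : H) = T x)
    (hT2 : ∀ x, T2 x = Kᗮ.orthogonalProjectionOnto (T x)) (h : H) :
    K.orthogonalProjectionOnto (T h) = T1 (K.orthogonalProjectionOnto h)
      + K.orthogonalProjectionOnto (T (Kᗮ.orthogonalProjectionOnto h)) := by
  rw [apply_eq_block_triangular hT1 hT2 h, map_add, map_add,
    orthogonalProjectionOnto_mem_subspace_eq_self, orthogonalProjectionOnto_mem_subspace_eq_self,
    orthogonalProjectionOnto_apply_of_mem_orthogonal (coe_mem _), add_zero]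

theorem orthogonalProjectionOnto_orthogonal_apply_of_block_triangular
    (hT1 : ∀ x, (T1 x : H) = T x) (hT2 : ∀ x, T2 x = Kᗮ.orthogonalProjectionOnto (T x)) (h : H) :
    Kᗮ.orthogonalProjectionOnto (T h) = T2 (Kᗮ.orthogonalProjectionOnto h) := by
  rw [apply_eq_block_triangular hT1 hT2 h, map_add, map_add,
    orthogonalProjectionOnto_mem_subspace_eq_self,
    orthogonalProjectionOnto_orthogonal_apply_eq_zero (coe_mem _),
    orthogonalProjectionOnto_orthogonal_apply_eq_zero (coe_mem _), zero_add, add_zero]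

theorem isUnit_of_block_triangular (hT1 : ∀ x, (T1 x : H) = T x)
    (hT2 : ∀ x, T2 x = Kᗮ.orthogonalProjectionOnto (T x)) (hu1 : IsUnit T1) (hu2 : IsUnit T2) :
    IsUnit T ∧ ∀ h, T⁻¹ʳ h = (T1⁻¹ʳ (K.orthogonalProjectionOnto h) : H)
      - T1⁻¹ʳ (K.orthogonalProjectionOnto (T (T2⁻¹ʳ (Kᗮ.orthogonalProjectionOnto h))))
      + T2⁻¹ʳ (Kᗮ.orthogonalProjectionOnto h) := by
  let R : H →L[ℂ] H := K.subtypeL ∘L T1⁻¹ʳ ∘L K.orthogonalProjectionOnto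
    - K.subtypeL ∘L T1⁻¹ʳ ∘L K.orthogonalProjectionOnto ∘L T ∘L Kᗮ.subtypeL ∘L T2⁻¹ʳ
      ∘L Kᗮ.orthogonalProjectionOnto
    + Kᗮ.subtypeL ∘L T2⁻¹ʳ ∘L Kᗮ.orthogonalProjectionOnto
  have hright : T * R = 1 := by
    ext h
    set y := T2⁻¹ʳ (Kᗮ.orthogonalProjectionOnto h)
    have hTy : T y = K.orthogonalProjectionOnto (T y) + Kᗮ.orthogonalProjectionOnto h := by
      calc (T y : H) = K.orthogonalProjectionOnto (T y) + Kᗮ.orthogonalProjectionOnto (T y) :=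
            (coe_orthogonalProjectionOnto_add_coe_orthogonal _).symm
        _ = _ := by rw [← hT2, apply_ringInverse_apply hu2]
    -- naming `c` keeps `rw [hTy]` from also rewriting the `T y` inside it
    set c := K.orthogonalProjectionOnto (T y)
    change T (T1⁻¹ʳ (K.orthogonalProjectionOnto h) - T1⁻¹ʳ c + y : H) = h
    rw [map_add, map_sub, ← hT1, ← hT1, apply_ringInverse_apply hu1, apply_ringInverse_apply hu1,
      hTy]
    conv_rhs => rw [← coe_orthogonalProjectionOnto_add_coe_orthogonal (K := K) h]
    abel
  have hleft : R * T = 1 := by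
    ext h
    change (T1⁻¹ʳ (K.orthogonalProjectionOnto (T h)) : H)
      - T1⁻¹ʳ (K.orthogonalProjectionOnto (T (T2⁻¹ʳ (Kᗮ.orthogonalProjectionOnto (T h)))))
      + T2⁻¹ʳ (Kᗮ.orthogonalProjectionOnto (T h)) = h
    rw [orthogonalProjectionOnto_orthogonal_apply_of_block_triangular hT1 hT2 h,
      ringInverse_apply_apply hu2, orthogonalProjectionOnto_apply_of_block_triangular hT1 hT2 h,
      map_add, ringInverse_apply_apply hu1, coe_add, add_sub_cancel_right,
      coe_orthogonalProjectionOnto_add_coe_orthogonal]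
  let U : (H →L[ℂ] H)ˣ := ⟨T, R, hright, hleft⟩
  exact ⟨U.isUnit, fun h => by rw [show T⁻¹ʳ = R from Ring.inverse_unit U]; rfl⟩

theorem isUnit_sub_smul_one_of_block_triangular (hT1 : ∀ x, (T1 x : H) = T x)
    (hT2 : ∀ x, T2 x = Kᗮ.orthogonalProjectionOnto (T x)) {z : ℂ}
    (hu1 : IsUnit (T1 - z • 1)) (hu2 : IsUnit (T2 - z • 1)) :
    IsUnit (T - z • 1) ∧ ∀ h, (T - z • 1)⁻¹ʳ h = ((T1 - z • 1)⁻¹ʳ (K.orthogonalProjectionOnto h) : H)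
      - (T1 - z • 1)⁻¹ʳ (K.orthogonalProjectionOnto
          ((T - z • 1) ((T2 - z • 1)⁻¹ʳ (Kᗮ.orthogonalProjectionOnto h))))
      + (T2 - z • 1)⁻¹ʳ (Kᗮ.orthogonalProjectionOnto h) :=
  isUnit_of_block_triangular (by simp [hT1]) (by simp [hT2]) hu1 hu2

end Submodule

section Colligation

variable {E H G : Type*}
  [NormedAddCommGroup E] [InnerProductSpace ℂ E] [CompleteSpace E]
  [NormedAddCommGroup H] [InnerProductSpace ℂ H] [CompleteSpace H]
  [NormedAddCommGroup G] [InnerProductSpace ℂ G] [CompleteSpace G]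

def characteristicFunction (A : H →L[ℂ] H) (Φ : H →L[ℂ] G) (J : G →L[ℂ] G) (z : ℂ) :
    G →L[ℂ] G :=
  1 - Complex.I • (Φ ∘L (A - z • 1)⁻¹ʳ ∘L Φ† ∘L J)

theorem colligation_adjoint_comp_comp {A : H →L[ℂ] H} {Φ : H →L[ℂ] G} {J : G →L[ℂ] G}
    (hcol : Complex.I⁻¹ • (A - A†) = Φ† ∘L (J ∘L Φ)) (V : E →L[ℂ] H) :
    Complex.I⁻¹ • (V† ∘L A ∘L V - (V† ∘L A ∘L V)†) = (Φ ∘L V)† ∘L (J ∘L (Φ ∘L V)) := by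
  calc Complex.I⁻¹ • (V† ∘L A ∘L V - (V† ∘L A ∘L V)†)
      = V† ∘L (Complex.I⁻¹ • (A - A†)) ∘L V := by
        simp only [adjoint_comp, adjoint_adjoint, comp_smul, smul_comp, comp_sub, sub_comp,
          comp_assoc]
    _ = (Φ ∘L V)† ∘L (J ∘L (Φ ∘L V)) := by
        rw [hcol, adjoint_comp]
        rfl

namespace Submodule

variable {K : Submodule ℂ H} [CompleteSpace K]

theorem eq_adjoint_subtypeL_comp_comp_subtypeL {T : H →L[ℂ] H} {T' : K →L[ℂ] K}
    (hT : ∀ x, T' x = K.orthogonalProjectionOnto (T x)) :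
    T' = K.subtypeL† ∘L T ∘L K.subtypeL := by
  ext x
  rw [adjoint_subtypeL, hT]
  rfl

theorem colligation_compression {A : H →L[ℂ] H} {Φ : H →L[ℂ] G} {J : G →L[ℂ] G}
    (hcol : Complex.I⁻¹ • (A - A†) = Φ† ∘L (J ∘L Φ)) {A' : K →L[ℂ] K} {Φ' : K →L[ℂ] G}
    (hA' : ∀ x, A' x = K.orthogonalProjectionOnto (A x)) (hΦ' : ∀ x, Φ' x = Φ x) :
    Complex.I⁻¹ • (A' - A'†) = Φ'† ∘L (J ∘L Φ') := by
  obtain rfl := eq_adjoint_subtypeL_comp_comp_subtypeL hA'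
  obtain rfl : Φ' = Φ ∘L K.subtypeL := ContinuousLinearMap.ext hΦ'
  exact colligation_adjoint_comp_comp hcol K.subtypeL

theorem orthogonalProjectionOnto_adjoint_apply {Φ : H →L[ℂ] G} {Φ' : K →L[ℂ] G}
    (hΦ' : ∀ x, Φ' x = Φ x) (g : G) : K.orthogonalProjectionOnto ((Φ†) g) = (Φ'†) g := by
  obtain rfl : Φ' = Φ ∘L K.subtypeL := ContinuousLinearMap.ext hΦ'
  rw [adjoint_comp, adjoint_subtypeL, comp_apply]

theorem orthogonalProjectionOnto_apply_coe_orthogonal_of_colligation {A : H →L[ℂ] H} {Φ : H →L[ℂ] G}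
    {J : G →L[ℂ] G} (hcol : Complex.I⁻¹ • (A - A†) = Φ† ∘L (J ∘L Φ))
    (hinv : ∀ x ∈ K, A x ∈ K) {Φ1 : K →L[ℂ] G} {Φ2 : Kᗮ →L[ℂ] G} (hΦ1 : ∀ x, Φ1 x = Φ x)
    (hΦ2 : ∀ x, Φ2 x = Φ x) (x : Kᗮ) :
    K.orthogonalProjectionOnto (A x) = Complex.I • (Φ1†) (J (Φ2 x)) := by
  have hadj : (A†) x ∈ Kᗮ := by
    have h := orthogonal_mem_invtSubmodule (T := A†) (U := K)
      (by simpa [Module.End.mem_invtSubmodule_iff_forall_mem_of_mem] using hinv)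
    exact (Module.End.mem_invtSubmodule_iff_forall_mem_of_mem _).mp h x x.2
  have hsplit : A x = Complex.I • (Complex.I⁻¹ • (A - A†)) x + (A†) x := by
    rw [smul_apply, smul_smul, mul_inv_cancel₀ Complex.I_ne_zero, one_smul, sub_apply,
      sub_add_cancel]
  rw [hsplit, map_add, orthogonalProjectionOnto_apply_of_mem_orthogonal hadj, add_zero, hcol,
    map_smul, comp_apply, comp_apply, orthogonalProjectionOnto_adjoint_apply hΦ1, hΦ2]

theorem characteristicFunction_eq_comp {A : H →L[ℂ] H} {Φ : H →L[ℂ] G} {J : G →L[ℂ] G}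
    (hcol : Complex.I⁻¹ • (A - A†) = Φ† ∘L (J ∘L Φ)) (hinv : ∀ x ∈ K, A x ∈ K)
    {A1 : K →L[ℂ] K} {A2 : Kᗮ →L[ℂ] Kᗮ} {Φ1 : K →L[ℂ] G} {Φ2 : Kᗮ →L[ℂ] G}
    (hA1 : ∀ x, (A1 x : H) = A x) (hA2 : ∀ x, A2 x = Kᗮ.orthogonalProjectionOnto (A x))
    (hΦ1 : ∀ x, Φ1 x = Φ x) (hΦ2 : ∀ x, Φ2 x = Φ x) {z : ℂ}
    (hu1 : IsUnit (A1 - z • 1)) (hu2 : IsUnit (A2 - z • 1)) :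
    characteristicFunction A Φ J z =
      characteristicFunction A1 Φ1 J z ∘L characteristicFunction A2 Φ2 J z := by
  have hcorner (x : Kᗮ) :
      K.orthogonalProjectionOnto ((A - z • 1) x) = Complex.I • (Φ1†) (J (Φ2 x)) := by
    rw [sub_apply, map_sub, smul_apply, one_apply_eq_self, map_smul,
      orthogonalProjectionOnto_apply_of_mem_orthogonal x.2, smul_zero, sub_zero,
      orthogonalProjectionOnto_apply_coe_orthogonal_of_colligation hcol hinv hΦ1 hΦ2]
  obtain ⟨-, hresolvent⟩ := isUnit_sub_smul_one_of_block_triangular hA1 hA2 hu1 hu2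
  ext g
  simp only [characteristicFunction, comp_apply, sub_apply, smul_apply, one_apply_eq_self]
  rw [hresolvent, hcorner]
  simp only [orthogonalProjectionOnto_adjoint_apply hΦ1, orthogonalProjectionOnto_adjoint_apply hΦ2,
    map_add, map_sub, map_smul, ← hΦ1, ← hΦ2]
  module

end Submodule

end Colligation

theorem statement2_general
    {H G : Type*}
    [NormedAddCommGroup H] [InnerProductSpace ℂ H] [CompleteSpace H]
    [NormedAddCommGroup G] [InnerProductSpace ℂ G] [CompleteSpace G]
    (A : H →L[ℂ] H) (Φ : H →L[ℂ] G) (J : G →L[ℂ] G)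
    (hcol : Complex.I⁻¹ • (A - adjoint A) = adjoint Φ ∘L (J ∘L Φ))
    (K : Submodule ℂ H) [CompleteSpace K]
    (hinv : ∀ x ∈ K, A x ∈ K)
    (A1 : K →L[ℂ] K) (hA1 : ∀ x : K, (A1 x : H) = A x)
    (A2 : Kᗮ →L[ℂ] Kᗮ) (hA2 : ∀ x : Kᗮ, A2 x = Submodule.orthogonalProjectionOnto Kᗮ (A x))
    (Φ1 : K →L[ℂ] G) (hΦ1 : ∀ x : K, Φ1 x = Φ x)
    (Φ2 : Kᗮ →L[ℂ] G) (hΦ2 : ∀ x : Kᗮ, Φ2 x = Φ x) :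
    (Complex.I⁻¹ • (A1 - adjoint A1) = adjoint Φ1 ∘L (J ∘L Φ1)) ∧
    (Complex.I⁻¹ • (A2 - adjoint A2) = adjoint Φ2 ∘L (J ∘L Φ2)) ∧
    (∀ x : Kᗮ, (Submodule.orthogonalProjectionOnto K (A x) : H) = Complex.I • (adjoint Φ1 (J (Φ2 x)) : H)) ∧
    (∀ h : H, A h = (A1 (Submodule.orthogonalProjectionOnto K h) : H)
        + (A2 (Submodule.orthogonalProjectionOnto Kᗮ h) : H)
        + Complex.I • (adjoint Φ1 (J (Φ2 (Submodule.orthogonalProjectionOnto Kᗮ h))) : H)) ∧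
    (∀ z : ℂ, IsUnit (A1 - z • (1 : K →L[ℂ] K)) → IsUnit (A2 - z • (1 : Kᗮ →L[ℂ] Kᗮ)) →
      IsUnit (A - z • (1 : H →L[ℂ] H)) ∧
      (1 : G →L[ℂ] G) - Complex.I •
          (Φ ∘L Ring.inverse (A - z • (1 : H →L[ℂ] H)) ∘L adjoint Φ ∘L J) =
        ((1 : G →L[ℂ] G) - Complex.I •
            (Φ1 ∘L Ring.inverse (A1 - z • (1 : K →L[ℂ] K)) ∘L adjoint Φ1 ∘L J)) ∘L
        ((1 : G →L[ℂ] G) - Complex.I •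
            (Φ2 ∘L Ring.inverse (A2 - z • (1 : Kᗮ →L[ℂ] Kᗮ)) ∘L adjoint Φ2 ∘L J))) := by
  have hA1' (x : K) : A1 x = K.orthogonalProjectionOnto (A x) := by
    rw [← hA1, orthogonalProjectionOnto_mem_subspace_eq_self]
  have hcorner := orthogonalProjectionOnto_apply_coe_orthogonal_of_colligation hcol hinv hΦ1 hΦ2
  refine ⟨colligation_compression hcol hA1' hΦ1, colligation_compression hcol hA2 hΦ2,
    fun x => by rw [hcorner, coe_smul], fun h => ?_, fun z hu1 hu2 =>
      ⟨(isUnit_sub_smul_one_of_block_triangular hA1 hA2 hu1 hu2).1,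
        characteristicFunction_eq_comp hcol hinv hA1 hA2 hΦ1 hΦ2 hu1 hu2⟩⟩
  rw [apply_eq_block_triangular hA1 hA2 h, hcorner, coe_smul]

/-- Projection of a colligation onto an invariant subspace and its orthogonal complement:
the two projected quintuples are colligations, the fundamental operator decomposes in
triangular form `A = A1 P1 + A2 P2 + i Φ1* J Φ2 P2`, and the characteristic function
factorizes accordingly. -/
theorem statement2
    {H G : Type*}
    [NormedAddCommGroup H] [InnerProductSpace ℂ H] [CompleteSpace H]
    [NormedAddCommGroup G] [InnerProductSpace ℂ G] [CompleteSpace G]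
    (A : H →L[ℂ] H) (Φ : H →L[ℂ] G) (J : G →L[ℂ] G)
    (hJsa : adjoint J = J) (hJinv : J ∘L J = ContinuousLinearMap.id ℂ G)
    (hcol : Complex.I⁻¹ • (A - adjoint A) = adjoint Φ ∘L (J ∘L Φ))
    (K : Submodule ℂ H) [CompleteSpace K]
    (hinv : ∀ x ∈ K, A x ∈ K)
    (A1 : K →L[ℂ] K) (hA1 : ∀ x : K, (A1 x : H) = A x)
    (A2 : Kᗮ →L[ℂ] Kᗮ) (hA2 : ∀ x : Kᗮ, A2 x = Submodule.orthogonalProjectionOnto Kᗮ (A x))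
    (Φ1 : K →L[ℂ] G) (hΦ1 : ∀ x : K, Φ1 x = Φ x)
    (Φ2 : Kᗮ →L[ℂ] G) (hΦ2 : ∀ x : Kᗮ, Φ2 x = Φ x) :
    (Complex.I⁻¹ • (A1 - adjoint A1) = adjoint Φ1 ∘L (J ∘L Φ1)) ∧
    (Complex.I⁻¹ • (A2 - adjoint A2) = adjoint Φ2 ∘L (J ∘L Φ2)) ∧
    (∀ x : Kᗮ, (Submodule.orthogonalProjectionOnto K (A x) : H) = Complex.I • (adjoint Φ1 (J (Φ2 x)) : H)) ∧
    (∀ h : H, A h = (A1 (Submodule.orthogonalProjectionOnto K h) : H)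
        + (A2 (Submodule.orthogonalProjectionOnto Kᗮ h) : H)
        + Complex.I • (adjoint Φ1 (J (Φ2 (Submodule.orthogonalProjectionOnto Kᗮ h))) : H)) ∧
    (∀ z : ℂ, IsUnit (A1 - z • (1 : K →L[ℂ] K)) → IsUnit (A2 - z • (1 : Kᗮ →L[ℂ] Kᗮ)) →
      IsUnit (A - z • (1 : H →L[ℂ] H)) ∧
      (1 : G →L[ℂ] G) - Complex.I •
          (Φ ∘L Ring.inverse (A - z • (1 : H →L[ℂ] H)) ∘L adjoint Φ ∘L J) =
        ((1 : G →L[ℂ] G) - Complex.I •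
            (Φ1 ∘L Ring.inverse (A1 - z • (1 : K →L[ℂ] K)) ∘L adjoint Φ1 ∘L J)) ∘L
        ((1 : G →L[ℂ] G) - Complex.I •
            (Φ2 ∘L Ring.inverse (A2 - z • (1 : Kᗮ →L[ℂ] Kᗮ)) ∘L adjoint Φ2 ∘L J))) :=
  statement2_general A Φ J hcol K hinv A1 hA1 A2 hA2 Φ1 hΦ1 Φ2 hΦ2
end
end

section
/- Let H be a complex Hilbert space, A : H → H a bounded linear operator, H0 a closed subspace with A H0 ⊆ H0, and let A0 : H0 → H0 be the restriction of A to H0. Let G ⊆ ℂ be an open connected set all of whose points are regular for A, i.e., G ⊆ ρ(A). If there exists a point z0 ∈ G with z0 ∈ ρ(A0), then every point of G belongs to ρ(A0). -/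
/-!
For `z ∈ ρ(A)`, the restriction `A₀ - z` is invertible exactly when the resolvent
`(A - z)⁻¹` maps `H₀` into itself, the inverse then being its restriction. Both this
condition and its failure are open in `z`: the first because invertible operators on
the Banach space `H₀` form an open set, the second because the resolvent is continuous
and `H₀` is closed. Hence they split the connected set `G ⊆ ρ(A)`, and since `z₀` lies in
the first part, so does all of `G`.
-/

namespace ContinuousLinearMap

section Restriction

variable {R M : Type*} [Ring R] [TopologicalSpace M] [AddCommGroup M] [Module R M]
  [IsTopologicalAddGroup M] {p : Submodule R M}

theorem ring_inverse_apply_apply {T : M →L[R] M} (hT : IsUnit T) (x : M) :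
    Ring.inverse T (T x) = x := by
  simpa using congr($(Ring.inverse_mul_cancel T hT) x)

theorem apply_ring_inverse_apply {T : M →L[R] M} (hT : IsUnit T) (x : M) :
    T (Ring.inverse T x) = x := by
  simpa using congr($(Ring.mul_inverse_cancel T hT) x)

theorem isUnit_restriction_iff_mapsTo_ring_inverse {T : M →L[R] M} {T₀ : p →L[R] p}
    (hT₀ : ∀ x : p, (T₀ x : M) = T x) (hT : IsUnit T) :
    IsUnit T₀ ↔ Set.MapsTo ⇑(Ring.inverse T) (p : Set M) p := by
  constructor
  · intro hT₀unit x hx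
    set y := Ring.inverse T₀ ⟨x, hx⟩
    have hTy : T y = x := by
      rw [← hT₀, apply_ring_inverse_apply hT₀unit]
    rw [← hTy, ring_inverse_apply_apply hT]
    exact y.2
  · intro hmaps
    let S : p →L[R] p := (Ring.inverse T).restrict hmaps
    refine ⟨⟨T₀, S, ?_, ?_⟩, rfl⟩ <;> ext x : 2
    · exact (hT₀ (S x)).trans (apply_ring_inverse_apply hT x)
    · exact congrArg (⇑(Ring.inverse T)) (hT₀ x) |>.trans (ring_inverse_apply_apply hT x)

end Restriction

theorem isOpen_setOf_isUnit_and_not_mapsTo_ring_inverse {𝕜 E X : Type*}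
    [NontriviallyNormedField 𝕜] [NormedAddCommGroup E] [NormedSpace 𝕜 E] [CompleteSpace E]
    [TopologicalSpace X] {p : Submodule 𝕜 E} (hp : IsClosed (p : Set E)) {B : X → E →L[𝕜] E}
    (hB : Continuous B) :
    IsOpen {z | IsUnit (B z) ∧ ¬Set.MapsTo ⇑(Ring.inverse (B z)) (p : Set E) p} := by
  rw [isOpen_iff_mem_nhds]
  rintro z ⟨⟨u, hu⟩, hz⟩
  obtain ⟨x, hx, hnx⟩ : ∃ x ∈ p, Ring.inverse (B z) x ∉ p := by
    simpa [Set.MapsTo] using hz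
  have hcont : ContinuousAt (fun w => Ring.inverse (B w) x) z := by
    have : ContinuousAt (fun w => Ring.inverse (B w)) z :=
      (hu ▸ NormedRing.inverse_continuousAt u).comp hB.continuousAt
    exact (apply 𝕜 E x).continuous.continuousAt.comp this
  filter_upwards [(Units.isOpen.preimage hB).mem_nhds ⟨u, hu⟩,
    hcont (hp.isOpen_compl.mem_nhds hnx)] with w hw hwx
  exact ⟨hw, fun hmaps => hwx (hmaps hx)⟩

end ContinuousLinearMap

open ContinuousLinearMap

theorem statement3_general
    {H : Type*} [NormedAddCommGroup H] [InnerProductSpace ℂ H] [CompleteSpace H]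
    (A : H →L[ℂ] H)
    (H0 : Submodule ℂ H) (hH0 : IsClosed (H0 : Set H))
    (A0 : H0 →L[ℂ] H0) (hA0 : ∀ x : H0, (A0 x : H) = A x)
    (G : Set ℂ) (hGconn : IsConnected G)
    (hGreg : ∀ z ∈ G, IsUnit (A - z • (1 : H →L[ℂ] H)))
    (z0 : ℂ) (hz0 : z0 ∈ G) (hz0reg : IsUnit (A0 - z0 • (1 : H0 →L[ℂ] H0))) :
    ∀ z ∈ G, IsUnit (A0 - z • (1 : H0 →L[ℂ] H0)) := by
  have : CompleteSpace H0 := hH0.completeSpace_coe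
  have hrestr (z : ℂ) (x : H0) : ((A0 - z • 1) x : H) = (A - z • 1) x := by simp [hA0]
  have hiff (z : ℂ) (hz : IsUnit (A - z • 1)) :=
    isUnit_restriction_iff_mapsTo_ring_inverse (hrestr z) hz
  have hopen : IsOpen {z : ℂ | IsUnit (A0 - z • 1)} :=
    (Units.isOpen (R := H0 →L[ℂ] H0)).preimage (by fun_prop)
  refine hGconn.isPreconnected.subset_left_of_subset_union hopen
    (isOpen_setOf_isUnit_and_not_mapsTo_ring_inverse hH0
      (by fun_prop : Continuous fun z : ℂ => A - z • 1)) ?_ ?_ ⟨z0, hz0, hz0reg⟩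
  · exact Set.disjoint_left.mpr fun z hunit ⟨hz, hnot⟩ => hnot ((hiff z hz).mp hunit)
  · intro z hz
    by_cases hmaps : Set.MapsTo ⇑(Ring.inverse (A - z • 1)) (H0 : Set H) H0
    · exact Or.inl ((hiff z (hGreg z hz)).mpr hmaps)
    · exact Or.inr ⟨hGreg z hz, hmaps⟩

/-- If `H0` is a closed subspace invariant under the bounded operator `A`, `A0` is the
restriction of `A` to `H0`, and `G` is an open connected set of regular points of `A`
containing a regular point of `A0`, then every point of `G` is a regular point of `A0`. -/
theorem statement3
    {H : Type*} [NormedAddCommGroup H] [InnerProductSpace ℂ H] [CompleteSpace H]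
    (A : H →L[ℂ] H)
    (H0 : Submodule ℂ H) (hH0 : IsClosed (H0 : Set H))
    (hinv : ∀ x ∈ H0, A x ∈ H0)
    (A0 : H0 →L[ℂ] H0) (hA0 : ∀ x : H0, (A0 x : H) = A x)
    (G : Set ℂ) (hGopen : IsOpen G) (hGconn : IsConnected G)
    (hGreg : ∀ z ∈ G, IsUnit (A - z • (1 : H →L[ℂ] H)))
    (z0 : ℂ) (hz0 : z0 ∈ G) (hz0reg : IsUnit (A0 - z0 • (1 : H0 →L[ℂ] H0))) :
    ∀ z ∈ G, IsUnit (A0 - z • (1 : H0 →L[ℂ] H0)) :=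
  statement3_general A H0 hH0 A0 hA0 G hGconn hGreg z0 hz0 hz0reg
end

section
/- Let (H, G; A, Φ, J) be an operator colligation with characteristic function S(z) = I_G − i Φ (A − z I_H)⁻¹ Φ* J, and set R(z) = (A − z I_H)⁻¹ ∘ Φ* ∘ J for z ∈ ρ(A). Then for every z ∈ ρ(A) the identity S(z)* ∘ J ∘ S(z) − J = 2 (Im z) · R(z)* ∘ R(z) holds. Consequently S(z)* J S(z) − J is a nonnegative operator when Im z > 0, zero when Im z = 0, and nonpositive when Im z < 0 (for z ∈ ρ(A)). -/
/-!
Put `B = A - z` and `T = B⁻¹`. The colligation condition says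
`Φ* J Φ = -i (B - B*) + 2 (Im z)`, and sandwiching it between `T*` and `T` gives
`T* Φ* J Φ T = -i (T* - T) + 2 (Im z) T* T`. Expanding `S(z)* J S(z)` with `S(z) = 1 - i Φ R(z)`,
the two terms `∓ i T` and `± i T*` cancel the cross terms, leaving `J + 2 (Im z) R(z)* R(z)`.
The sign statements follow because `R(z)* R(z)` is a positive operator.
-/

noncomputable section

open ContinuousLinearMap
open scoped ComplexInnerProductSpace ComplexOrder

theorem star_mul_sub_star_mul_of_mul_eq_one {R : Type*} [Ring R] [StarRing R] {b t : R}
    (h : b * t = 1) : star t * (b - star b) * t = star t - t := by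
  rw [mul_sub, sub_mul, mul_assoc, h, ← star_mul, h, star_one, mul_one, one_mul]

theorem ContinuousLinearMap.IsPositive.inner_smul_apply_nonpos {𝕜 E : Type*} [RCLike 𝕜]
    [NormedAddCommGroup E] [InnerProductSpace 𝕜 E] {T : E →L[𝕜] E} (hT : T.IsPositive)
    {c : 𝕜} (hc : c ≤ 0) (x : E) : inner 𝕜 ((c • T) x) x ≤ 0 := by
  have := (hT.smul_of_nonneg (neg_nonneg.2 hc)).inner_nonneg_left x
  rwa [neg_smul, neg_apply, inner_neg_left, neg_nonneg] at this

section Colligation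

variable {H G : Type*}
    [NormedAddCommGroup H] [InnerProductSpace ℂ H] [CompleteSpace H]
    [NormedAddCommGroup G] [InnerProductSpace ℂ G] [CompleteSpace G]

theorem adjoint_sub_smul_one (A : H →L[ℂ] H) (z : ℂ) :
    adjoint (A - z • 1) = adjoint A - (starRingEnd ℂ z) • 1 := by
  simp only [← star_eq_adjoint, star_sub, star_smul, star_one]
  rfl

theorem colligation_eq_sub_smul_one {A : H →L[ℂ] H} {Φ : H →L[ℂ] G} {J : G →L[ℂ] G}
    (hcol : Complex.I⁻¹ • (A - adjoint A) = adjoint Φ ∘L (J ∘L Φ)) (z : ℂ) :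
    adjoint Φ ∘L (J ∘L Φ) = Complex.I⁻¹ • ((A - z • 1) - adjoint (A - z • 1))
      + ((2 * z.im : ℝ) : ℂ) • 1 := by
  have hz : Complex.I⁻¹ * (z - starRingEnd ℂ z) = ((2 * z.im : ℝ) : ℂ) := by
    rw [Complex.sub_conj]
    push_cast
    field_simp
  rw [← hcol, adjoint_sub_smul_one, ← hz]
  module

theorem adjoint_comp_colligation_comp_of_comp_eq_one {A : H →L[ℂ] H} {Φ : H →L[ℂ] G}
    {J : G →L[ℂ] G} (hcol : Complex.I⁻¹ • (A - adjoint A) = adjoint Φ ∘L (J ∘L Φ)) {z : ℂ}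
    {T : H →L[ℂ] H} (hT : (A - z • 1) ∘L T = 1) :
    adjoint T ∘L (adjoint Φ ∘L (J ∘L Φ)) ∘L T
      = Complex.I⁻¹ • (adjoint T - T) + ((2 * z.im : ℝ) : ℂ) • (adjoint T ∘L T) := by
  have hsandwich : adjoint T ∘L ((A - z • 1) - adjoint (A - z • 1)) ∘L T = adjoint T - T :=
    star_mul_sub_star_mul_of_mul_eq_one hT
  rw [colligation_eq_sub_smul_one hcol z, add_comp, comp_add, smul_comp, comp_smul, hsandwich,
    smul_comp, comp_smul, one_def, id_comp]

theorem adjoint_one_sub_I_smul_comp_comp (Φ : H →L[ℂ] G) (J : G →L[ℂ] G) (R : G →L[ℂ] H) :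
    adjoint (1 - Complex.I • (Φ ∘L R)) ∘L J ∘L (1 - Complex.I • (Φ ∘L R))
      = J - Complex.I • (J ∘L Φ ∘L R) + Complex.I • (adjoint R ∘L adjoint Φ ∘L J)
        + adjoint R ∘L (adjoint Φ ∘L J ∘L Φ) ∘L R := by
  rw [map_sub, LinearIsometryEquiv.map_smulₛₗ, adjoint_one, adjoint_comp]
  simp only [Complex.conj_I, comp_sub, sub_comp, comp_smul, smul_comp, neg_smul, neg_comp,
    comp_assoc, one_def, id_comp, comp_id, smul_sub, smul_neg, smul_smul, Complex.I_mul_I,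
    one_smul]
  abel

theorem adjoint_one_sub_I_smul_comp_comp_sub {Φ : H →L[ℂ] G} {J : G →L[ℂ] G}
    (hJ : adjoint J = J) {T : H →L[ℂ] H} {c : ℂ}
    (h : adjoint T ∘L (adjoint Φ ∘L (J ∘L Φ)) ∘L T
      = Complex.I⁻¹ • (adjoint T - T) + c • (adjoint T ∘L T)) :
    adjoint (1 - Complex.I • (Φ ∘L T ∘L adjoint Φ ∘L J)) ∘L J
        ∘L (1 - Complex.I • (Φ ∘L T ∘L adjoint Φ ∘L J)) - J
      = c • (adjoint (T ∘L adjoint Φ ∘L J) ∘L (T ∘L adjoint Φ ∘L J)) := by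
  have hR : adjoint (T ∘L adjoint Φ ∘L J) = J ∘L Φ ∘L adjoint T := by
    simp only [adjoint_comp, adjoint_adjoint, hJ, comp_assoc]
  have hmid : J ∘L Φ ∘L adjoint T ∘L (adjoint Φ ∘L J ∘L Φ) ∘L T ∘L adjoint Φ ∘L J
      = J ∘L Φ ∘L (Complex.I⁻¹ • (adjoint T - T) + c • (adjoint T ∘L T)) ∘L adjoint Φ ∘L J := by
    rw [← h]
    simp only [comp_assoc]
  rw [adjoint_one_sub_I_smul_comp_comp, hR]
  simp only [comp_assoc] at hmid ⊢
  rw [hmid, Complex.inv_I]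
  simp only [comp_add, add_comp, comp_sub, sub_comp, comp_smul, smul_comp, comp_assoc]
  module

end Colligation

theorem statement7_general
    {H G : Type*}
    [NormedAddCommGroup H] [InnerProductSpace ℂ H] [CompleteSpace H]
    [NormedAddCommGroup G] [InnerProductSpace ℂ G] [CompleteSpace G]
    (A : H →L[ℂ] H) (Φ : H →L[ℂ] G) (J : G →L[ℂ] G)
    (hJsa : adjoint J = J)
    (hcol : Complex.I⁻¹ • (A - adjoint A) = adjoint Φ ∘L (J ∘L Φ))
    (z : ℂ) (hz : IsUnit (A - z • (1 : H →L[ℂ] H)))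
    (S : G →L[ℂ] G)
    (hS : S = (1 : G →L[ℂ] G) - Complex.I •
        (Φ ∘L Ring.inverse (A - z • (1 : H →L[ℂ] H)) ∘L adjoint Φ ∘L J))
    (R : G →L[ℂ] H)
    (hR : R = Ring.inverse (A - z • (1 : H →L[ℂ] H)) ∘L adjoint Φ ∘L J) :
    (adjoint S ∘L J ∘L S - J = ((2 * z.im : ℝ) : ℂ) • (adjoint R ∘L R)) ∧
    (0 < z.im → ∀ g : G, 0 ≤ ⟪(adjoint S ∘L J ∘L S - J) g, g⟫) ∧
    (z.im = 0 → adjoint S ∘L J ∘L S - J = 0) ∧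
    (z.im < 0 → ∀ g : G, ⟪(adjoint S ∘L J ∘L S - J) g, g⟫ ≤ 0) := by
  have hJident : adjoint S ∘L J ∘L S - J = ((2 * z.im : ℝ) : ℂ) • (adjoint R ∘L R) := by
    subst hS hR
    exact adjoint_one_sub_I_smul_comp_comp_sub hJsa
      (adjoint_comp_colligation_comp_of_comp_eq_one hcol (Ring.mul_inverse_cancel _ hz))
  have hpos := isPositive_adjoint_comp_self R
  refine ⟨hJident, fun him g => ?_, fun him => ?_, fun him g => ?_⟩
  · rw [hJident]
    exact (hpos.smul_of_nonneg (Complex.zero_le_real.2 (by positivity))).inner_nonneg_left g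
  · rw [hJident, him]
    simp
  · rw [hJident]
    exact hpos.inner_smul_apply_nonpos (by exact_mod_cast (by linarith : 2 * z.im ≤ 0)) g

/-- The `J`-property of the characteristic function: for `z` in the resolvent set of `A`,
`S(z)* J S(z) - J = 2 (Im z) R(z)* R(z)` where `R(z) = (A - z)⁻¹ Φ* J`; consequently
`S(z)* J S(z) - J` is nonnegative for `Im z > 0`, zero for `Im z = 0` and nonpositive for
`Im z < 0`. -/
theorem statement7
    {H G : Type*}
    [NormedAddCommGroup H] [InnerProductSpace ℂ H] [CompleteSpace H]
    [NormedAddCommGroup G] [InnerProductSpace ℂ G] [CompleteSpace G]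
    (A : H →L[ℂ] H) (Φ : H →L[ℂ] G) (J : G →L[ℂ] G)
    (hJsa : adjoint J = J) (hJinv : J ∘L J = ContinuousLinearMap.id ℂ G)
    (hcol : Complex.I⁻¹ • (A - adjoint A) = adjoint Φ ∘L (J ∘L Φ))
    (z : ℂ) (hz : IsUnit (A - z • (1 : H →L[ℂ] H)))
    (S : G →L[ℂ] G)
    (hS : S = (1 : G →L[ℂ] G) - Complex.I •
        (Φ ∘L Ring.inverse (A - z • (1 : H →L[ℂ] H)) ∘L adjoint Φ ∘L J))
    (R : G →L[ℂ] H)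
    (hR : R = Ring.inverse (A - z • (1 : H →L[ℂ] H)) ∘L adjoint Φ ∘L J) :
    (adjoint S ∘L J ∘L S - J = ((2 * z.im : ℝ) : ℂ) • (adjoint R ∘L R)) ∧
    (0 < z.im → ∀ g : G, 0 ≤ ⟪(adjoint S ∘L J ∘L S - J) g, g⟫) ∧
    (z.im = 0 → adjoint S ∘L J ∘L S - J = 0) ∧
    (z.im < 0 → ∀ g : G, ⟪(adjoint S ∘L J ∘L S - J) g, g⟫ ≤ 0) :=
  statement7_general A Φ J hJsa hcol z hz S hS R hR
end
end

section
/- Let G be a finite-dimensional complex inner product space, P an orthogonal projection on G, Q = I − P, and J = P − Q. Let S0 : G → G be a linear operator satisfying S0 J S0* ≤ J (i.e., J − S0 J S0* is a nonnegative operator). Then the operator P − S0 Q is invertible, and the Potapov–Ginzburg transform W0 := (P − S0 Q)⁻¹ (S0 P − Q) is a contraction: I − W0 W0* ≥ 0, equivalently ‖W0‖ ≤ 1. -/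
/-!
Write `A = P - S₀Q` and `B = S₀P - Q`. Since `P` and `Q` are complementary orthogonal projections,
`A A* - B B* = J - S₀ J S₀*`, so the hypothesis says `B B* ≤ A A*`, i.e. `‖B* g‖ ≤ ‖A* g‖`.
If `A* g = 0` then also `B* g = 0`, and `g = P A* g - Q B* g = 0`; so `A` is invertible in finite
dimension. Conjugating `B B* ≤ A A*` by `A⁻¹` gives `W₀ W₀* ≤ 1`, and in the C⋆-algebra of
operators this means `‖W₀‖ ≤ 1`.
-/

open ContinuousLinearMap
open scoped ComplexInnerProductSpace ComplexOrder

theorem mul_star_le_one_of_mul_star_le {R : Type*} [Ring R] [StarRing R] [PartialOrder R]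
    [StarOrderedRing R] {u a b : R} (hu : u * a = 1) (h : b * star b ≤ a * star a) :
    u * b * star (u * b) ≤ 1 :=
  calc u * b * star (u * b) = u * (b * star b) * star u := by simp only [star_mul, mul_assoc]
    _ ≤ u * (a * star a) * star u := star_right_conjugate_le_conjugate h u
    _ = 1 := by simp only [← mul_assoc, ← star_mul, hu, one_mul, star_one]

theorem CStarAlgebra.norm_le_one_of_mul_star_le_one {A : Type*} [CStarAlgebra A] [PartialOrder A]
    [StarOrderedRing A] {a : A} (h : a * star a ≤ 1) : ‖a‖ ≤ 1 := by
  have : ‖a‖ * ‖a‖ ≤ 1 := by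
    rw [← CStarRing.norm_self_mul_star]
    exact (CStarAlgebra.norm_le_one_iff_of_nonneg _ (mul_star_self_nonneg a)).2 h
  nlinarith [norm_nonneg a]

namespace ContinuousLinearMap

theorem isPositive_iff_forall_inner_nonneg {E : Type*} [NormedAddCommGroup E]
    [InnerProductSpace ℂ E] (T : E →L[ℂ] E) : T.IsPositive ↔ ∀ x, 0 ≤ ⟪T x, x⟫ := by
  refine ⟨fun hT => hT.inner_nonneg_left, fun h => (isPositive_iff T).2 ⟨?_, h⟩⟩
  exact (T : E →ₗ[ℂ] E).isSymmetric_iff_inner_map_self_real.2 fun x =>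
    Complex.conj_eq_iff_im.2 (Complex.nonneg_iff.1 (h x)).2.symm

variable {𝕜 E : Type*} [RCLike 𝕜] [NormedAddCommGroup E] [InnerProductSpace 𝕜 E] [CompleteSpace E]

theorem star_apply_eq_zero_of_mul_star_le {A B : E →L[𝕜] E} (h : B * star B ≤ A * star A)
    {x : E} (hx : star A x = 0) : star B x = 0 := by
  have norm_sq : ∀ T : E →L[𝕜] E, ‖star T x‖ ^ 2 = RCLike.re (inner 𝕜 ((T * star T) x) x) :=
    fun T => by rw [mul_apply_eq_comp, star_eq_adjoint, ← adjoint_inner_right, inner_self_eq_norm_sq]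
  have hpos := ((le_def _ _).1 h).re_inner_nonneg_left x
  rw [sub_apply, inner_sub_left, map_sub, ← norm_sq, ← norm_sq, hx, norm_zero] at hpos
  simpa using hpos

end ContinuousLinearMap

namespace PotapovGinzburg

section StarRing

variable {R : Type*} [Ring R] [StarRing R]

/-- With `q = 1 - p`, `den p s = p - s q` and `num p s = s p - q` are the two factors of the
Potapov–Ginzburg transform `den⁻¹ * num`. -/
def den (p s : R) : R := p - s * (1 - p)

def num (p s : R) : R := s * p - (1 - p)

variable {p : R}

theorem star_den (hp : IsStarProjection p) (s : R) : star (den p s) = p - (1 - p) * star s := by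
  simp [den, hp.isSelfAdjoint.star_eq]

theorem star_num (hp : IsStarProjection p) (s : R) : star (num p s) = p * star s - (1 - p) := by
  simp [num, hp.isSelfAdjoint.star_eq]

theorem den_mul_star_sub_num_mul_star (hp : IsStarProjection p) (s : R) :
    den p s * star (den p s) - num p s * star (num p s) =
      p - (1 - p) - s * (p - (1 - p)) * star s := by
  rw [star_den hp, star_num hp, den, num]
  generalize hq : 1 - p = q
  have hq' : IsStarProjection q := hq ▸ hp.one_sub
  have hpq : p * q = 0 := hq ▸ hp.mul_one_sub_self
  have hqp : q * p = 0 := hq ▸ hp.one_sub_mul_self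
  calc _ = p * p - p * q * star s - s * (q * p) + s * (q * q) * star s
          - (s * (p * p) * star s - s * (p * q) - q * p * star s + q * q) := by noncomm_ring
    _ = _ := by
      rw [hp.isIdempotentElem.eq, hq'.isIdempotentElem.eq, hpq, hqp]
      noncomm_ring

theorem mul_star_den_sub_one_sub_mul_star_num (hp : IsStarProjection p) (s : R) :
    p * star (den p s) - (1 - p) * star (num p s) = 1 := by
  rw [star_den hp, star_num hp, mul_sub, mul_sub, ← mul_assoc, ← mul_assoc, hp.mul_one_sub_self,
    hp.one_sub_mul_self, hp.isIdempotentElem.eq, hp.one_sub.isIdempotentElem.eq]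
  noncomm_ring

theorem num_mul_star_le_den_mul_star [PartialOrder R] [StarOrderedRing R] (hp : IsStarProjection p)
    {s : R} (h : s * (p - (1 - p)) * star s ≤ p - (1 - p)) :
    num p s * star (num p s) ≤ den p s * star (den p s) := by
  rw [← sub_nonneg, den_mul_star_sub_num_mul_star hp]
  exact sub_nonneg.2 h

end StarRing

theorem isUnit_den {𝕜 E : Type*} [RCLike 𝕜] [NormedAddCommGroup E] [InnerProductSpace 𝕜 E]
    [CompleteSpace E] [FiniteDimensional 𝕜 E] {P S : E →L[𝕜] E} (hP : IsStarProjection P)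
    (hle : num P S * star (num P S) ≤ den P S * star (den P S)) : IsUnit (den P S) := by
  have hinj : Function.Injective ⇑(star (den P S)) := by
    refine (injective_iff_map_eq_zero _).2 fun x hx => ?_
    have hnum := star_apply_eq_zero_of_mul_star_le hle hx
    calc x = (P * star (den P S) - (1 - P) * star (num P S) : E →L[𝕜] E) x := by
          rw [mul_star_den_sub_one_sub_mul_star_num hP, one_apply_eq_self]
      _ = 0 := by simp [mul_apply_eq_comp, hx, hnum]
  exact isUnit_star.1 <|
    isUnit_iff_bijective.2 ⟨hinj, LinearMap.injective_iff_surjective.1 hinj⟩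

end PotapovGinzburg

open PotapovGinzburg

/-- The Potapov–Ginzburg transform: if `P` is an orthogonal projection on a finite-dimensional
complex inner product space, `Q = 1 - P`, `J = P - Q`, and `S0` satisfies `S0 J S0* ≤ J`, then
`P - S0 Q` is invertible and `W0 = (P - S0 Q)⁻¹ (S0 P - Q)` is a contraction. -/
theorem statement8
    {G : Type*} [NormedAddCommGroup G] [InnerProductSpace ℂ G] [FiniteDimensional ℂ G]
    (P : G →L[ℂ] G) (hPproj : P ∘L P = P) (hPsa : adjoint P = P)
    (Q : G →L[ℂ] G) (hQ : Q = 1 - P)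
    (J : G →L[ℂ] G) (hJ : J = P - Q)
    (S0 : G →L[ℂ] G)
    (hS0 : ∀ g : G, 0 ≤ ⟪(J - S0 ∘L J ∘L adjoint S0) g, g⟫) :
    IsUnit (P - S0 ∘L Q) ∧
    (∀ g : G, 0 ≤ ⟪((1 : G →L[ℂ] G) -
        (Ring.inverse (P - S0 ∘L Q) ∘L (S0 ∘L P - Q)) ∘L
          adjoint (Ring.inverse (P - S0 ∘L Q) ∘L (S0 ∘L P - Q))) g, g⟫) ∧
    ‖Ring.inverse (P - S0 ∘L Q) ∘L (S0 ∘L P - Q)‖ ≤ 1 := by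
  subst hQ hJ
  have : CompleteSpace G := FiniteDimensional.complete ℂ G
  have hP : IsStarProjection P := ⟨hPproj, hPsa⟩
  have hSJ : S0 * (P - (1 - P)) * star S0 ≤ P - (1 - P) :=
    (le_def _ _).2 ((isPositive_iff_forall_inner_nonneg _).2 hS0)
  have hle := num_mul_star_le_den_mul_star hP hSJ
  have hden : IsUnit (den P S0) := isUnit_den hP hle
  have hW := mul_star_le_one_of_mul_star_le (Ring.inverse_mul_cancel _ hden) hle
  exact ⟨hden, (isPositive_iff_forall_inner_nonneg _).1 ((le_def _ _).1 hW),
    CStarAlgebra.norm_le_one_of_mul_star_le_one hW⟩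
end

section
/- Let (H, G; A, Φ, J) be an operator colligation, let Re A = (A + A*)/2, and define V(z) = (1/2) Φ (Re A − z I_H)⁻¹ Φ* for z ∈ ρ(Re A). Then for every z ∈ ρ(A) ∩ ρ(Re A): the operators S(z) + I_G and I_G + i V(z) J are invertible; (S(z) + I_G)(I_G + i V(z) J) = 2 I_G = (I_G + i V(z) J)(S(z) + I_G); V(z) = i (S(z) − I_G)(S(z) + I_G)⁻¹ J = i (S(z) + I_G)⁻¹ (S(z) − I_G) J; and S(z) = (I_G − i V(z) J)(I_G + i V(z) J)⁻¹ = (I_G + i V(z) J)⁻¹ (I_G − i V(z) J). Here S(z) = I_G − i Φ (A − z I_H)⁻¹ Φ* J is the characteristic function. -/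
/-!
Since `(A - z) - (Re A - z) = (A - A*)/2 = (i/2) Φ* J Φ`, the second resolvent identity,
sandwiched between `Φ` and `(i/2) Φ* J`, shows that `p = (i/2) Φ (A - z)⁻¹ Φ* J` and
`w = (i/2) Φ (Re A - z)⁻¹ Φ* J` satisfy `w - p = p w = w p`, so `1 - p` and `1 + w` are mutually
inverse. As `S(z) + I = 2 (1 - p)` and `I + i V(z) J = 1 + w`, both products are `2 I`, and the
linear fractional formulas are then algebra in the ring of operators on `G`, with `J² = I` moving
the last `J` across.
-/

open ContinuousLinearMap
open scoped Ring

section Cayley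

variable {R : Type*} [Ring R] [Algebra ℂ R]

theorem isUnit_and_inverse_eq_of_mul_eq_two_smul {x y : R} (hxy : x * y = (2 : ℂ) • 1)
    (hyx : y * x = (2 : ℂ) • 1) : IsUnit x ∧ x⁻¹ʳ = (2⁻¹ : ℂ) • y := by
  have half : (2⁻¹ : ℂ) • (2 : ℂ) • (1 : R) = 1 := by
    rw [smul_smul, inv_mul_cancel₀ two_ne_zero, one_smul]
  let u : Rˣ := ⟨x, (2⁻¹ : ℂ) • y, by rw [mul_smul_comm, hxy, half],
    by rw [smul_mul_assoc, hyx, half]⟩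
  exact ⟨⟨u, rfl⟩, Ring.inverse_unit u⟩

theorem eq_I_smul_sub_one_mul_inverse_of_mul_eq_two_smul {s v : R}
    (h₁ : (s + 1) * (1 + Complex.I • v) = (2 : ℂ) • 1)
    (h₂ : (1 + Complex.I • v) * (s + 1) = (2 : ℂ) • 1) :
    v = Complex.I • ((s - 1) * (s + 1)⁻¹ʳ) ∧ v = Complex.I • ((s + 1)⁻¹ʳ * (s - 1)) := by
  rw [(isUnit_and_inverse_eq_of_mul_eq_two_smul h₁ h₂).2, mul_smul_comm, smul_mul_assoc]
  constructor
  · rw [show s - 1 = (s + 1) - (2 : ℂ) • 1 by module, sub_mul, h₁, smul_mul_assoc, one_mul]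
    match_scalars <;> simp [mul_comm]
  · rw [show s - 1 = (s + 1) - (2 : ℂ) • 1 by module, mul_sub, h₂, mul_smul_comm, mul_one]
    match_scalars <;> simp [mul_comm]

theorem eq_one_sub_I_smul_mul_inverse_of_mul_eq_two_smul {s v : R}
    (h₁ : (s + 1) * (1 + Complex.I • v) = (2 : ℂ) • 1)
    (h₂ : (1 + Complex.I • v) * (s + 1) = (2 : ℂ) • 1) :
    s = (1 - Complex.I • v) * (1 + Complex.I • v)⁻¹ʳ ∧
      s = (1 + Complex.I • v)⁻¹ʳ * (1 - Complex.I • v) := by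
  have hcompl : 1 - Complex.I • v = (2 : ℂ) • 1 - (1 + Complex.I • v) := by module
  rw [(isUnit_and_inverse_eq_of_mul_eq_two_smul h₂ h₁).2, mul_smul_comm, smul_mul_assoc, hcompl]
  constructor
  · rw [sub_mul, h₂, smul_mul_assoc, one_mul]
    module
  · rw [mul_sub, h₁, mul_smul_comm, mul_one]
    module

end Cayley

section Resolvent

variable {𝕜 E F : Type*} [Ring 𝕜] [TopologicalSpace E] [AddCommGroup E] [Module 𝕜 E]
  [IsTopologicalAddGroup E] [TopologicalSpace F] [AddCommGroup F] [Module 𝕜 F]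
  [IsTopologicalAddGroup F]

theorem one_sub_comp_inverse_comp_mul_one_add {a b : E →L[𝕜] E} {Φ : E →L[𝕜] F}
    {Ψ : F →L[𝕜] E} (ha : IsUnit a) (hb : IsUnit b) (h : a - b = Ψ ∘L Φ) :
    (1 - Φ ∘L a⁻¹ʳ ∘L Ψ) * (1 + Φ ∘L b⁻¹ʳ ∘L Ψ) = 1 := by
  have hres : a⁻¹ʳ * (Ψ ∘L Φ) * b⁻¹ʳ = b⁻¹ʳ - a⁻¹ʳ := by
    rw [← h, ← neg_sub b a, mul_neg, neg_mul,
      ← Ring.inverse_sub_inverse (iff_of_true ha hb), neg_sub]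
  have hpw : (Φ ∘L a⁻¹ʳ ∘L Ψ) * (Φ ∘L b⁻¹ʳ ∘L Ψ) = Φ ∘L b⁻¹ʳ ∘L Ψ - Φ ∘L a⁻¹ʳ ∘L Ψ := by
    rw [← comp_sub, ← sub_comp, ← hres]
    simp only [mul_def, comp_assoc]
  calc (1 - Φ ∘L a⁻¹ʳ ∘L Ψ) * (1 + Φ ∘L b⁻¹ʳ ∘L Ψ)
      = 1 + ((Φ ∘L b⁻¹ʳ ∘L Ψ - Φ ∘L a⁻¹ʳ ∘L Ψ) - (Φ ∘L a⁻¹ʳ ∘L Ψ) * (Φ ∘L b⁻¹ʳ ∘L Ψ)) := by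
        noncomm_ring
    _ = 1 := by rw [hpw, sub_self, add_zero]

theorem one_add_comp_inverse_comp_mul_one_sub {a b : E →L[𝕜] E} {Φ : E →L[𝕜] F}
    {Ψ : F →L[𝕜] E} (ha : IsUnit a) (hb : IsUnit b) (h : a - b = Ψ ∘L Φ) :
    (1 + Φ ∘L b⁻¹ʳ ∘L Ψ) * (1 - Φ ∘L a⁻¹ʳ ∘L Ψ) = 1 := by
  have hres : b⁻¹ʳ * (Ψ ∘L Φ) * a⁻¹ʳ = b⁻¹ʳ - a⁻¹ʳ := by
    rw [← h, Ring.inverse_sub_inverse (iff_of_true hb ha)]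
  have hwp : (Φ ∘L b⁻¹ʳ ∘L Ψ) * (Φ ∘L a⁻¹ʳ ∘L Ψ) = Φ ∘L b⁻¹ʳ ∘L Ψ - Φ ∘L a⁻¹ʳ ∘L Ψ := by
    rw [← comp_sub, ← sub_comp, ← hres]
    simp only [mul_def, comp_assoc]
  calc (1 + Φ ∘L b⁻¹ʳ ∘L Ψ) * (1 - Φ ∘L a⁻¹ʳ ∘L Ψ)
      = 1 + ((Φ ∘L b⁻¹ʳ ∘L Ψ - Φ ∘L a⁻¹ʳ ∘L Ψ) - (Φ ∘L b⁻¹ʳ ∘L Ψ) * (Φ ∘L a⁻¹ʳ ∘L Ψ)) := by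
        noncomm_ring
    _ = 1 := by rw [hwp, sub_self, add_zero]

end Resolvent

theorem statement9_general
    {H G : Type*}
    [NormedAddCommGroup H] [InnerProductSpace ℂ H] [CompleteSpace H]
    [NormedAddCommGroup G] [InnerProductSpace ℂ G] [CompleteSpace G]
    (A : H →L[ℂ] H) (Φ : H →L[ℂ] G) (J : G →L[ℂ] G)
    (hJinv : J ∘L J = ContinuousLinearMap.id ℂ G)
    (hcol : Complex.I⁻¹ • (A - adjoint A) = adjoint Φ ∘L (J ∘L Φ))
    (z : ℂ)
    (hzA : IsUnit (A - z • (1 : H →L[ℂ] H)))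
    (hzRe : IsUnit ((2 : ℂ)⁻¹ • (A + adjoint A) - z • (1 : H →L[ℂ] H)))
    (S : G →L[ℂ] G)
    (hS : S = (1 : G →L[ℂ] G) - Complex.I •
        (Φ ∘L Ring.inverse (A - z • (1 : H →L[ℂ] H)) ∘L adjoint Φ ∘L J))
    (V : G →L[ℂ] G)
    (hV : V = (2 : ℂ)⁻¹ •
        (Φ ∘L Ring.inverse ((2 : ℂ)⁻¹ • (A + adjoint A) - z • (1 : H →L[ℂ] H)) ∘L adjoint Φ)) :
    IsUnit (S + 1) ∧
    IsUnit ((1 : G →L[ℂ] G) + Complex.I • (V ∘L J)) ∧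
    ((S + 1) ∘L ((1 : G →L[ℂ] G) + Complex.I • (V ∘L J)) = (2 : ℂ) • (1 : G →L[ℂ] G)) ∧
    (((1 : G →L[ℂ] G) + Complex.I • (V ∘L J)) ∘L (S + 1) = (2 : ℂ) • (1 : G →L[ℂ] G)) ∧
    (V = Complex.I • ((S - 1) ∘L Ring.inverse (S + 1) ∘L J)) ∧
    (V = Complex.I • (Ring.inverse (S + 1) ∘L (S - 1) ∘L J)) ∧
    (S = ((1 : G →L[ℂ] G) - Complex.I • (V ∘L J)) ∘L
        Ring.inverse ((1 : G →L[ℂ] G) + Complex.I • (V ∘L J))) ∧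
    (S = Ring.inverse ((1 : G →L[ℂ] G) + Complex.I • (V ∘L J)) ∘L
        ((1 : G →L[ℂ] G) - Complex.I • (V ∘L J))) := by
  set T := A - z • (1 : H →L[ℂ] H)
  set T' := (2 : ℂ)⁻¹ • (A + adjoint A) - z • (1 : H →L[ℂ] H)
  set Ψ : G →L[ℂ] H := ((2 : ℂ)⁻¹ * Complex.I) • (adjoint Φ ∘L J)
  have hdiff : T - T' = Ψ ∘L Φ := by
    have hA : A - adjoint A = Complex.I • (adjoint Φ ∘L J ∘L Φ) := by
      rw [← hcol, smul_smul, mul_inv_cancel₀ Complex.I_ne_zero, one_smul]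
    calc T - T' = (2 : ℂ)⁻¹ • (A - adjoint A) := by module
      _ = Ψ ∘L Φ := by rw [hA, smul_smul, smul_comp, comp_assoc]
  have hX : S + 1 = (2 : ℂ) • (1 - Φ ∘L T⁻¹ʳ ∘L Ψ) := by
    rw [hS]
    simp only [Ψ, comp_smul]
    module
  have hY : 1 + Complex.I • (V ∘L J) = 1 + Φ ∘L T'⁻¹ʳ ∘L Ψ := by
    rw [hV]
    simp only [Ψ, comp_smul, smul_comp, comp_assoc, smul_smul, mul_comm]
  have hXY : (S + 1) * (1 + Complex.I • (V ∘L J)) = (2 : ℂ) • 1 := by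
    rw [hX, hY, smul_mul_assoc, one_sub_comp_inverse_comp_mul_one_add hzA hzRe hdiff]
  have hYX : (1 + Complex.I • (V ∘L J)) * (S + 1) = (2 : ℂ) • 1 := by
    rw [hX, hY, mul_smul_comm, one_add_comp_inverse_comp_mul_one_sub hzA hzRe hdiff]
  have hVJJ : V = (V ∘L J) ∘L J := by rw [comp_assoc, hJinv, comp_id]
  obtain ⟨hV₁, hV₂⟩ := eq_I_smul_sub_one_mul_inverse_of_mul_eq_two_smul hXY hYX
  obtain ⟨hS₁, hS₂⟩ := eq_one_sub_I_smul_mul_inverse_of_mul_eq_two_smul hXY hYX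
  refine ⟨(isUnit_and_inverse_eq_of_mul_eq_two_smul hXY hYX).1,
    (isUnit_and_inverse_eq_of_mul_eq_two_smul hYX hXY).1, hXY, hYX, ?_, ?_, hS₁, hS₂⟩
  · rw [hVJJ, hV₁, smul_comp, mul_def, comp_assoc]
  · rw [hVJJ, hV₂, smul_comp, mul_def, comp_assoc]

/-- The Cayley-type relation between the characteristic function `S(z)` of a colligation and
the function `V(z) = (1/2) Φ (Re A - z)⁻¹ Φ*`: for `z ∈ ρ(A) ∩ ρ(Re A)` the operators
`S(z) + I` and `I + i V(z) J` are invertible, their product (in both orders) is `2 I`, and the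
mutual linear fractional formulas hold. -/
theorem statement9
    {H G : Type*}
    [NormedAddCommGroup H] [InnerProductSpace ℂ H] [CompleteSpace H]
    [NormedAddCommGroup G] [InnerProductSpace ℂ G] [CompleteSpace G]
    (A : H →L[ℂ] H) (Φ : H →L[ℂ] G) (J : G →L[ℂ] G)
    (hJsa : adjoint J = J) (hJinv : J ∘L J = ContinuousLinearMap.id ℂ G)
    (hcol : Complex.I⁻¹ • (A - adjoint A) = adjoint Φ ∘L (J ∘L Φ))
    (z : ℂ)
    (hzA : IsUnit (A - z • (1 : H →L[ℂ] H)))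
    (hzRe : IsUnit ((2 : ℂ)⁻¹ • (A + adjoint A) - z • (1 : H →L[ℂ] H)))
    (S : G →L[ℂ] G)
    (hS : S = (1 : G →L[ℂ] G) - Complex.I •
        (Φ ∘L Ring.inverse (A - z • (1 : H →L[ℂ] H)) ∘L adjoint Φ ∘L J))
    (V : G →L[ℂ] G)
    (hV : V = (2 : ℂ)⁻¹ •
        (Φ ∘L Ring.inverse ((2 : ℂ)⁻¹ • (A + adjoint A) - z • (1 : H →L[ℂ] H)) ∘L adjoint Φ)) :
    IsUnit (S + 1) ∧
    IsUnit ((1 : G →L[ℂ] G) + Complex.I • (V ∘L J)) ∧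
    ((S + 1) ∘L ((1 : G →L[ℂ] G) + Complex.I • (V ∘L J)) = (2 : ℂ) • (1 : G →L[ℂ] G)) ∧
    (((1 : G →L[ℂ] G) + Complex.I • (V ∘L J)) ∘L (S + 1) = (2 : ℂ) • (1 : G →L[ℂ] G)) ∧
    (V = Complex.I • ((S - 1) ∘L Ring.inverse (S + 1) ∘L J)) ∧
    (V = Complex.I • (Ring.inverse (S + 1) ∘L (S - 1) ∘L J)) ∧
    (S = ((1 : G →L[ℂ] G) - Complex.I • (V ∘L J)) ∘L
        Ring.inverse ((1 : G →L[ℂ] G) + Complex.I • (V ∘L J))) ∧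
    (S = Ring.inverse ((1 : G →L[ℂ] G) + Complex.I • (V ∘L J)) ∘L
        ((1 : G →L[ℂ] G) - Complex.I • (V ∘L J))) :=
  statement9_general A Φ J hJinv hcol z hzA hzRe S hS V hV
end

section
/- Let H be a complex Hilbert space and A : H → H a bounded linear operator whose imaginary part Im A = (A − A*)/(2i) is a compact operator (A is quasihermitian). Then: (i) every accumulation point of the spectrum σ(A) belongs to the spectrum σ(Re A) of the real part Re A = (A + A*)/2; (ii) every point z ∈ σ(A) with Im z ≠ 0 is an eigenvalue of A, and the eigenspace ker(A − z I) is finite-dimensional. -/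
/-!
Write `R = Re A`, which is self-adjoint, so that `A - R = i • Im A` is compact. Off `σ(R)` one has
`z - A = (z - R) (1 - K z)` with `K z = (z - R)⁻¹ (A - R)` compact and holomorphic in `z`. Near a
point `z₀ ∉ σ(R)`, splitting `K z₀` into a finite-rank part and a part of norm `< 1` shows that
`1 - K z` is invertible iff a holomorphic determinant `d z` does not vanish. By the identity theorem
an accumulation point of `σ(A)` outside `σ(R)` is an interior point of `σ(A)`, and since `σ(R)ᶜ` is
connected, it would then lie entirely in the compact set `σ(A)`, which is absurd. For a non-real
`z ∈ σ(A)`, the Fredholm alternative for the compact operator `K z` yields an eigenvector, and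
`ker (A - z) = ker (1 - K z)` is finite-dimensional.
-/

open ContinuousLinearMap Filter Topology

theorem IsPreconnected.subset_of_accPt_imp_mem_nhds {X : Type*} [TopologicalSpace X]
    [PerfectSpace X] {U S : Set X} (hU : IsPreconnected U) (hS : IsClosed S)
    (h : ∀ z ∈ U, AccPt z (𝓟 S) → S ∈ 𝓝 z) {w : X} (hwU : w ∈ U) (hw : AccPt w (𝓟 S)) :
    U ⊆ S := by
  refine (hU.subset_of_closure_inter_subset isOpen_interior
    ⟨w, hwU, mem_interior_iff_mem_nhds.mpr (h w hwU hw)⟩ ?_).trans interior_subset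
  rintro z ⟨hz, hzU⟩
  refine mem_interior_iff_mem_nhds.mpr (h z hzU ?_)
  exact (isOpen_interior.perfect_closure.acc z hz).mono
    (principal_mono.mpr (closure_minimal interior_subset hS))

theorem isUnit_one_sub_iff_of_norm_sub_lt_one {R : Type*} [NormedRing R] [HasSummableGeomSeries R]
    {a b : R} (h : ‖a - b‖ < 1) :
    IsUnit (1 - a) ↔ IsUnit (1 - b * Ring.inverse (1 - (a - b))) := by
  have hu : IsUnit (1 - (a - b)) := ⟨Units.oneSub _ h, rfl⟩
  have hfac : 1 - a = (1 - b * Ring.inverse (1 - (a - b))) * (1 - (a - b)) := by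
    rw [sub_mul, one_mul, mul_assoc, Ring.inverse_mul_cancel _ hu, mul_one]
    abel
  rw [hfac, hu.mul_right_iff]

theorem DifferentiableAt.matrix_det {𝕜 ι : Type*} [NontriviallyNormedField 𝕜]
    [Fintype ι] [DecidableEq ι] {M : 𝕜 → Matrix ι ι 𝕜} {z : 𝕜}
    (h : ∀ i j, DifferentiableAt 𝕜 (fun w => M w i j) z) :
    DifferentiableAt 𝕜 (fun w => (M w).det) z := by
  simp only [Matrix.det_apply]
  refine DifferentiableAt.fun_sum fun σ _ => ?_
  simp only [Units.smul_def, zsmul_eq_mul]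
  exact (DifferentiableAt.fun_finsetProd fun i _ => h (σ i) i).const_mul _

theorem algebraMap_sub_eq_mul_one_sub_resolvent_mul {R 𝒜 : Type*} [CommRing R] [Ring 𝒜]
    [Algebra R 𝒜] {a b : 𝒜} {z : R} (hz : z ∉ spectrum R a) :
    algebraMap R 𝒜 z - b = (algebraMap R 𝒜 z - a) * (1 - resolvent a z * (b - a)) := by
  rw [mul_sub, mul_one, ← mul_assoc, resolvent,
    Ring.mul_inverse_cancel _ (spectrum.notMem_iff.mp hz), one_mul]
  abel

theorem mem_spectrum_iff_not_isUnit_one_sub_resolvent_mul {R 𝒜 : Type*} [CommRing R] [Ring 𝒜]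
    [Algebra R 𝒜] {a b : 𝒜} {z : R} (hz : z ∉ spectrum R a) :
    z ∈ spectrum R b ↔ ¬IsUnit (1 - resolvent a z * (b - a)) := by
  rw [spectrum.mem_iff, algebraMap_sub_eq_mul_one_sub_resolvent_mul hz,
    (spectrum.notMem_iff.mp hz).mul_left_iff]

section Banach

variable {𝕜 X : Type*} [NontriviallyNormedField 𝕜] [NormedAddCommGroup X] [NormedSpace 𝕜 X]
  [CompleteSpace X]

theorem IsCompactOperator.isUnit_one_sub_iff {K : X →L[𝕜] X} (hK : IsCompactOperator K) :
    IsUnit (1 - K) ↔ ∀ x, K x = x → x = 0 := by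
  refine ⟨fun hu x hx => (isUnit_iff_bijective.mp hu).injective (by simp [hx]), fun h => ?_⟩
  rcases hK.hasEigenvalue_or_mem_resolventSet one_ne_zero with hev | hres
  · obtain ⟨x, hx, hx0⟩ := hev.exists_hasEigenvector
    exact absurd (h x (by simpa using Module.End.mem_eigenspace_iff.mp hx)) hx0
  · simpa using spectrum.mem_resolventSet_iff.mp hres

theorem isUnit_one_sub_iff_det_ne_zero [ProperSpace 𝕜] {W : Submodule 𝕜 X} [FiniteDimensional 𝕜 W]
    (N : X →L[𝕜] X) (hN : ∀ x, N x ∈ W) :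
    IsUnit (1 - N) ↔
      LinearMap.det (LinearMap.id - (N : X →ₗ[𝕜] X).restrict fun x _ => hN x) ≠ 0 := by
  have := FiniteDimensional.proper 𝕜 W
  have hNc : IsCompactOperator N :=
    (isCompactOperator_of_locallyCompactSpace_dom (N.codRestrict W hN)).continuous_comp
      continuous_subtype_val
  rw [hNc.isUnit_one_sub_iff, ← isUnit_iff_ne_zero, ← LinearMap.isUnit_iff_isUnit_det,
    LinearMap.isUnit_iff_ker_eq_bot, LinearMap.ker_eq_bot']
  refine ⟨fun h w hw => Subtype.ext (h w ?_), fun h x hx => ?_⟩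
  · exact (sub_eq_zero.mp (by simpa using congrArg Subtype.val hw)).symm
  · have hxW : x ∈ W := hx ▸ hN x
    exact congrArg Subtype.val (h ⟨x, hxW⟩ (Subtype.ext (by simp [hx])))

variable {A R : X →L[𝕜] X} {z : 𝕜}

theorem ker_sub_smul_one_eq_ker_one_sub_resolvent_mul (hz : z ∉ spectrum 𝕜 R) :
    LinearMap.ker ((A - z • (1 : X →L[𝕜] X) : X →L[𝕜] X) : X →ₗ[𝕜] X) =
      LinearMap.ker ((1 - resolvent R z * (A - R) : X →L[𝕜] X) : X →ₗ[𝕜] X) := by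
  have hfac : A - z • (1 : X →L[𝕜] X) =
      -((algebraMap 𝕜 _ z - R) * (1 - resolvent R z * (A - R))) := by
    rw [← algebraMap_sub_eq_mul_one_sub_resolvent_mul hz, Algebra.algebraMap_eq_smul_one, neg_sub]
  ext x
  simp only [LinearMap.mem_ker, coe_coe, hfac, neg_apply, neg_eq_zero]
  exact map_eq_zero_iff _ (isUnit_iff_bijective.mp (spectrum.notMem_iff.mp hz)).injective

theorem exists_ne_zero_apply_eq_smul_of_mem_spectrum (hAR : IsCompactOperator (A - R))
    (hzR : z ∉ spectrum 𝕜 R) (hz : z ∈ spectrum 𝕜 A) : ∃ v : X, v ≠ 0 ∧ A v = z • v := by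
  have hK : IsCompactOperator (resolvent R z * (A - R)) := hAR.clm_comp (resolvent R z)
  obtain ⟨v, hKv, hv⟩ : ∃ v, (resolvent R z * (A - R)) v = v ∧ v ≠ 0 := by
    simpa [hK.isUnit_one_sub_iff] using
      (mem_spectrum_iff_not_isUnit_one_sub_resolvent_mul hzR).mp hz
  have hmem : v ∈ LinearMap.ker ((1 - resolvent R z * (A - R) : X →L[𝕜] X) : X →ₗ[𝕜] X) := by
    simp only [LinearMap.mem_ker, coe_coe, sub_apply, one_apply_eq_self, hKv, sub_self]
  rw [← ker_sub_smul_one_eq_ker_one_sub_resolvent_mul hzR] at hmem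
  exact ⟨v, hv, by simpa [sub_eq_zero] using hmem⟩

end Banach

section Hilbert

variable {𝕜 H : Type*} [RCLike 𝕜] [NormedAddCommGroup H] [InnerProductSpace 𝕜 H]

theorem IsCompactOperator.finiteDimensional_ker_one_sub [CompleteSpace H] {K : H →L[𝕜] H}
    (hK : IsCompactOperator K) :
    FiniteDimensional 𝕜 (LinearMap.ker ((1 - K : H →L[𝕜] H) : H →ₗ[𝕜] H)) := by
  have hker : LinearMap.ker ((1 - K : H →L[𝕜] H) : H →ₗ[𝕜] H) =
      Module.End.eigenspace (K : H →ₗ[𝕜] H) 1 := by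
    ext x
    simpa [Module.End.mem_eigenspace_iff] using sub_eq_zero.trans eq_comm
  rw [hker]
  exact finite_dimensional_eigenspace hK 1 one_ne_zero

theorem finiteDimensional_ker_sub_smul_one [CompleteSpace H] {A R : H →L[𝕜] H} {z : 𝕜}
    (hAR : IsCompactOperator (A - R)) (hz : z ∉ spectrum 𝕜 R) :
    FiniteDimensional 𝕜 (LinearMap.ker ((A - z • (1 : H →L[𝕜] H) : H →L[𝕜] H) : H →ₗ[𝕜] H)) := by
  rw [ker_sub_smul_one_eq_ker_one_sub_resolvent_mul hz]
  exact (hAR.clm_comp (resolvent R z)).finiteDimensional_ker_one_sub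

theorem IsCompactOperator.exists_finiteDimensional_norm_sub_le {K : H →L[𝕜] H}
    (hK : IsCompactOperator K) {ε : ℝ} (hε : 0 < ε) :
    ∃ W : Submodule 𝕜 H, FiniteDimensional 𝕜 W ∧
      ∃ F : H →L[𝕜] H, (∀ x, F x ∈ W) ∧ ‖K - F‖ ≤ ε := by
  obtain ⟨M, hM, hKM⟩ := hK.image_closedBall_subset_compact (1 : ℝ)
  obtain ⟨t, -, ht, hMt⟩ := hM.finite_cover_balls hε
  have : FiniteDimensional 𝕜 (Submodule.span 𝕜 t) := FiniteDimensional.span_of_finite 𝕜 ht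
  refine ⟨_, this, (Submodule.span 𝕜 t).starProjection ∘L K, fun x => Submodule.coe_mem _, ?_⟩
  refine opNorm_le_of_unit_norm hε.le fun x hx => ?_
  obtain ⟨v, hvt, hKv⟩ := Set.mem_iUnion₂.mp (hMt (hKM ⟨x, by simp [hx], rfl⟩))
  calc ‖(K - (Submodule.span 𝕜 t).starProjection ∘L K) x‖
      = ‖K x - (Submodule.span 𝕜 t).starProjection (K x)‖ := rfl
    _ ≤ ‖K x - v‖ := by
      rw [Submodule.starProjection_minimal]
      exact ciInf_le ⟨0, by rintro _ ⟨w, rfl⟩; positivity⟩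
        (⟨v, Submodule.subset_span hvt⟩ : Submodule.span 𝕜 t)
    _ ≤ ε := (mem_ball_iff_norm.mp hKv).le

theorem LinearMap.det_id_sub_restrict_eq_det_inner {ι : Type*} [Fintype ι] [DecidableEq ι]
    {W : Submodule 𝕜 H} (b : OrthonormalBasis ι 𝕜 W) (N : H →ₗ[𝕜] H) (hN : ∀ x, N x ∈ W) :
    LinearMap.det (LinearMap.id - N.restrict fun x _ => hN x) =
      (Matrix.of fun i j => inner 𝕜 (b i : H) (b j - N (b j))).det := by
  rw [← LinearMap.det_toMatrix b.toBasis]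
  congr 1
  ext i j
  simp [LinearMap.toMatrix_apply, b.repr_apply_apply, inner_sub_right, ← Submodule.coe_inner,
    b.inner_eq_ite, LinearMap.restrict_apply]
  rfl

end Hilbert

section AnalyticFredholm

variable {H : Type*} [NormedAddCommGroup H] [InnerProductSpace ℂ H] [CompleteSpace H]

theorem exists_analyticAt_isUnit_one_sub_iff {c : ℂ → H →L[ℂ] H} {z₀ : ℂ}
    (hc : ∀ᶠ z in 𝓝 z₀, DifferentiableAt ℂ c z) (hc₀ : IsCompactOperator (c z₀)) :
    ∃ d : ℂ → ℂ, AnalyticAt ℂ d z₀ ∧ ∀ᶠ z in 𝓝 z₀, (IsUnit (1 - c z) ↔ d z ≠ 0) := by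
  obtain ⟨W, hW, F, hFW, hF⟩ := hc₀.exists_finiteDimensional_norm_sub_le one_half_pos
  let b := stdOrthonormalBasis ℂ W
  let N : ℂ → H →L[ℂ] H := fun z => F * Ring.inverse (1 - (c z - F))
  have hNW : ∀ z x, N z x ∈ W := fun z x => hFW _
  have hnear : ∀ᶠ z in 𝓝 z₀, ‖c z - F‖ < 1 :=
    (hc.self_of_nhds.continuousAt.sub continuousAt_const).norm.eventually_lt continuousAt_const
      (hF.trans_lt one_half_lt_one)
  refine ⟨fun z => (Matrix.of fun i j => inner ℂ (b i : H) (b j - N z (b j))).det, ?_, ?_⟩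
  · refine Complex.analyticAt_iff_eventually_differentiableAt.mpr ?_
    filter_upwards [hc, hnear] with z hcz hz
    have hN : DifferentiableAt ℂ N z :=
      ((differentiableAt_inverse ⟨Units.oneSub _ hz, rfl⟩).comp z
        ((hcz.sub_const F).const_sub 1)).const_mul F
    refine DifferentiableAt.matrix_det fun i j => ?_
    exact (innerSL ℂ (b i : H)).differentiableAt.comp z
      ((hN.clm_apply (differentiableAt_const _)).const_sub _)
  · filter_upwards [hnear] with z hz
    rw [isUnit_one_sub_iff_of_norm_sub_lt_one hz, isUnit_one_sub_iff_det_ne_zero (N z) (hNW z),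
      LinearMap.det_id_sub_restrict_eq_det_inner b]
    rfl

theorem eventually_not_isUnit_one_sub_of_frequently {c : ℂ → H →L[ℂ] H} {z₀ : ℂ}
    (hc : ∀ᶠ z in 𝓝 z₀, DifferentiableAt ℂ c z) (hc₀ : IsCompactOperator (c z₀))
    (h : ∃ᶠ z in 𝓝[≠] z₀, ¬IsUnit (1 - c z)) : ∀ᶠ z in 𝓝 z₀, ¬IsUnit (1 - c z) := by
  obtain ⟨d, hd, hiff⟩ := exists_analyticAt_isUnit_one_sub_iff hc hc₀
  have hzero : ∃ᶠ z in 𝓝[≠] z₀, d z = 0 :=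
    (h.and_eventually (hiff.filter_mono nhdsWithin_le_nhds)).mono fun z hz =>
      not_not.mp (mt hz.2.mpr hz.1)
  filter_upwards [hd.frequently_zero_iff_eventually_zero.mp hzero, hiff] with z hz hz'
  simp [hz', hz]

end AnalyticFredholm

theorem spectrum_mem_nhds_of_accPt {H : Type*} [NormedAddCommGroup H] [InnerProductSpace ℂ H]
    [CompleteSpace H] {A R : H →L[ℂ] H} (hAR : IsCompactOperator (A - R)) {z₀ : ℂ}
    (hz₀ : z₀ ∉ spectrum ℂ R) (hacc : AccPt z₀ (𝓟 (spectrum ℂ A))) : spectrum ℂ A ∈ 𝓝 z₀ := by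
  have hR : ∀ᶠ z in 𝓝 z₀, z ∉ spectrum ℂ R := (spectrum.isClosed R).isOpen_compl.mem_nhds hz₀
  have hc : ∀ᶠ z in 𝓝 z₀, DifferentiableAt ℂ (fun z => resolvent R z * (A - R)) z :=
    hR.mono fun z hz => (spectrum.hasDerivAt_resolvent_const_left
      (spectrum.mem_resolventSet_iff.mpr (spectrum.notMem_iff.mp hz))).differentiableAt.mul_const _
  have hfreq : ∃ᶠ z in 𝓝[≠] z₀, ¬IsUnit (1 - resolvent R z * (A - R)) :=
    ((accPt_iff_frequently_nhdsNE.mp hacc).and_eventually (hR.filter_mono nhdsWithin_le_nhds)).mono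
      fun z hz => (mem_spectrum_iff_not_isUnit_one_sub_resolvent_mul hz.2).mp hz.1
  filter_upwards [eventually_not_isUnit_one_sub_of_frequently hc (hAR.clm_comp _) hfreq, hR]
    with z hz hzR
  exact (mem_spectrum_iff_not_isUnit_one_sub_resolvent_mul hzR).mpr hz

/-- Spectrum of a quasihermitian operator: if `Im A = (A - A*)/(2i)` is compact, then every
accumulation point of `σ(A)` lies in `σ(Re A)`, and every non-real point of `σ(A)` is an
eigenvalue of `A` with finite-dimensional eigenspace. -/
theorem statement11
    {H : Type*} [NormedAddCommGroup H] [InnerProductSpace ℂ H] [CompleteSpace H]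
    (A : H →L[ℂ] H)
    (hcpt : IsCompactOperator ⇑(((2 : ℂ) * Complex.I)⁻¹ • (A - adjoint A))) :
    (∀ w : ℂ, AccPt w (Filter.principal (spectrum ℂ A)) →
      w ∈ spectrum ℂ ((2 : ℂ)⁻¹ • (A + adjoint A))) ∧
    (∀ z ∈ spectrum ℂ A, z.im ≠ 0 →
      (∃ v : H, v ≠ 0 ∧ A v = z • v) ∧
      FiniteDimensional ℂ (LinearMap.ker ((A - z • (1 : H →L[ℂ] H) : H →L[ℂ] H) : H →ₗ[ℂ] H))) := by
  set R : H →L[ℂ] H := (2 : ℂ)⁻¹ • (A + adjoint A)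
  have hR : IsSelfAdjoint R := by
    simp [R, IsSelfAdjoint, star_smul, star_eq_adjoint, add_comm]
  have hAR : IsCompactOperator (A - R) := by
    have : A - R = Complex.I • (((2 : ℂ) * Complex.I)⁻¹ • (A - adjoint A)) := by
      rw [smul_smul, show Complex.I * (2 * Complex.I)⁻¹ = 2⁻¹ by field_simp]
      module
    rw [this]
    exact hcpt.smul Complex.I
  refine ⟨fun w hw => ?_, fun z hz hzim => ?_⟩
  · by_contra hwR
    have hcover : (spectrum ℂ R)ᶜ ⊆ spectrum ℂ A :=
      hR.isConnected_spectrum_compl.isPreconnected.subset_of_accPt_imp_mem_nhds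
        (spectrum.isClosed A) (fun z hz => spectrum_mem_nhds_of_accPt hAR hz) hwR hw
    exact noncompact_univ ℂ (Set.compl_subset_iff_union.mp hcover ▸
      (spectrum.isCompact R).union (spectrum.isCompact A))
  · have hzR : z ∉ spectrum ℂ R := fun h => hzim (hR.im_eq_zero_of_mem_spectrum h)
    exact ⟨exists_ne_zero_apply_eq_smul_of_mem_spectrum hAR hzR hz,
      finiteDimensional_ker_sub_smul_one hAR hzR⟩
end

section
/- Let n, r ≥ 1, let A be an n×n complex matrix, Φ an r×n complex matrix, and J an r×r complex matrix with J = J*, J² = I_r, and (1/i)(A − A*) = Φ* J Φ. Then there exist an enumeration λ1, …, λn of the eigenvalues of A counted with algebraic multiplicity and column vectors η1, …, ηn ∈ ℂ^r such that: ηk* J ηk = 2 Im λk for each k = 1, …, n; ∑_{k=1}^n ηk ηk* = Φ Φ*; 2 ∑_{k=1}^n |Im λk| ≤ tr(Φ Φ*); and for every z ∈ ℂ not an eigenvalue of A, I_r − i Φ (A − z I_n)⁻¹ Φ* J = ∏_{k=1}^n ( I_r + (i/(z − λk)) ηk ηk* J ), where the product is taken left to right in increasing order of k. -/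
/-!
By Schur's theorem `A = U T U*` with `U` unitary and `T` upper triangular, and replacing
`(A, Φ)` by `(T, Φ U)` changes neither the colligation condition, nor the characteristic
polynomial, nor `Φ Φ*`, nor the characteristic function. For triangular `T` take `λₖ = Tₖₖ` and
`ηₖ` the `k`-th column of `Φ U`; the diagonal of the colligation condition is
`ηₖ* J ηₖ = 2 Im λₖ`. Splitting off the last row and column writes `T` as a block upper
triangular matrix, and the characteristic function of a block upper triangular colligation is
the product of those of its diagonal blocks, because the colligation condition determines the
off-diagonal block. Finally `J` is unitary, so `2 |Im λₖ| = |ηₖ* J ηₖ| ≤ ‖ηₖ‖²`, and these sum to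
`tr (Φ Φ*)`.
-/

noncomputable section

open Matrix

section MatrixFacts

variable {m n ι R : Type*}

theorem conjTranspose_mul_mul_apply [Fintype ι] [NonUnitalSemiring R] [Star R]
    (Φ : Matrix ι n R) (J : Matrix ι ι R) (k l : n) :
    (Φᴴ * J * Φ) k l = star (Φᵀ k) ⬝ᵥ J *ᵥ Φᵀ l := by
  rw [Matrix.mul_assoc, mul_apply]
  simp only [dotProduct, mulVec, mul_apply, Finset.mul_sum, conjTranspose_apply, transpose_apply,
    Pi.star_apply]

theorem mul_conjTranspose_eq_sum_vecMulVec [Fintype n] [NonUnitalSemiring R] [Star R]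
    (Φ : Matrix ι n R) :
    Φ * Φᴴ = ∑ k, vecMulVec (Φᵀ k) (star (Φᵀ k)) := by
  ext i j
  simp [mul_apply, vecMulVec_apply, Matrix.sum_apply]

theorem fromBlocks_zero₂₁_sub_smul_one [DecidableEq m] [DecidableEq n] [CommRing R]
    (A₁ : Matrix m m R) (C : Matrix m n R) (A₂ : Matrix n n R) (z : R) :
    fromBlocks A₁ C 0 A₂ - z • 1 = fromBlocks (A₁ - z • 1) C 0 (A₂ - z • 1) := by
  rw [← fromBlocks_one, fromBlocks_smul, sub_eq_add_neg, fromBlocks_neg, fromBlocks_add]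
  simp [sub_eq_add_neg]

theorem submatrix_sub_smul_one_equiv [DecidableEq m] [DecidableEq n] [CommRing R]
    (A : Matrix n n R) (z : R) (e : m ≃ n) :
    (A - z • 1).submatrix e e = A.submatrix e e - z • 1 := by
  ext i j
  simp [one_apply]

variable [Fintype m] [Fintype n] [DecidableEq m] [DecidableEq n] [CommRing R] [StarRing R]

theorem star_mul_mul_sub_smul_one {U : Matrix n n R} (hU : U ∈ unitary (Matrix n n R))
    (A : Matrix n n R) (z : R) :
    star U * A * U - z • 1 = star U * (A - z • 1) * U := by
  rw [Matrix.mul_sub, Matrix.sub_mul, Matrix.mul_smul, Matrix.smul_mul, Matrix.mul_one,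
    Unitary.star_mul_self_of_mem hU]

theorem submatrix_equiv_mem_unitary {W : Matrix m m R} (hW : W ∈ unitary (Matrix m m R))
    (e : n ≃ m) :
    W.submatrix e e ∈ unitary (Matrix n n R) := by
  rw [← unitaryGroup, mem_unitaryGroup_iff, star_eq_conjTranspose, conjTranspose_submatrix,
    submatrix_mul_equiv, ← star_eq_conjTranspose, Unitary.mul_star_self_of_mem hW,
    submatrix_one_equiv]

theorem fromBlocks_one_mem_unitary {V : Matrix m m R} (hV : V ∈ unitary (Matrix m m R)) :
    fromBlocks V 0 0 (1 : Matrix n n R) ∈ unitary (Matrix (m ⊕ n) (m ⊕ n) R) := by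
  rw [← unitaryGroup, mem_unitaryGroup_iff, star_eq_conjTranspose, fromBlocks_conjTranspose,
    fromBlocks_multiply]
  simp [← star_eq_conjTranspose, Unitary.mul_star_self_of_mem hV]

end MatrixFacts

theorem norm_star_dotProduct_mulVec_le {ι 𝕜 : Type*} [Fintype ι] [DecidableEq ι] [RCLike 𝕜]
    {J : Matrix ι ι 𝕜} (hJ : Jᴴ * J = 1) (v : ι → 𝕜) :
    ‖star v ⬝ᵥ J *ᵥ v‖ ≤ RCLike.re (star v ⬝ᵥ v) := by
  have hnorm : ∀ w : ι → 𝕜, ‖(WithLp.toLp 2 w : EuclideanSpace 𝕜 ι)‖ * ‖WithLp.toLp 2 w‖ =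
      RCLike.re (star w ⬝ᵥ w) := fun w => by
    rw [← inner_self_eq_norm_mul_norm (𝕜 := 𝕜), EuclideanSpace.inner_toLp_toLp, dotProduct_comm]
  have hJv : star (J *ᵥ v) ⬝ᵥ J *ᵥ v = star v ⬝ᵥ v := by
    rw [star_mulVec, ← dotProduct_mulVec, mulVec_mulVec, hJ, one_mulVec]
  have hiso : ‖(WithLp.toLp 2 (J *ᵥ v) : EuclideanSpace 𝕜 ι)‖ = ‖WithLp.toLp 2 v‖ :=
    (mul_self_inj (norm_nonneg _) (norm_nonneg _)).1 (by rw [hnorm, hnorm, hJv])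
  calc ‖star v ⬝ᵥ J *ᵥ v‖
      = ‖inner 𝕜 (WithLp.toLp 2 v : EuclideanSpace 𝕜 ι) (WithLp.toLp 2 (J *ᵥ v))‖ := by
        rw [EuclideanSpace.inner_toLp_toLp, dotProduct_comm]
    _ ≤ ‖(WithLp.toLp 2 v : EuclideanSpace 𝕜 ι)‖ * ‖WithLp.toLp 2 (J *ᵥ v)‖ :=
        norm_inner_le_norm _ _
    _ = RCLike.re (star v ⬝ᵥ v) := by rw [hiso, hnorm]

section LastIndex

variable {n : ℕ}

theorem isUpperTriangular_iff_castSucc {R : Type*} [Zero R]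
    (M : Matrix (Fin (n + 1)) (Fin (n + 1)) R) :
    M.IsUpperTriangular ↔
      (M.submatrix Fin.castSucc Fin.castSucc).IsUpperTriangular ∧
        ∀ j : Fin n, M (Fin.last n) j.castSucc = 0 := by
  constructor
  · intro h
    exact ⟨fun i j hij => h (Fin.castSucc_lt_castSucc_iff.2 hij),
      fun j => h (Fin.castSucc_lt_last j)⟩
  · rintro ⟨h₁, h₂⟩ i j hij
    induction i using Fin.lastCases with
    | last => induction j using Fin.lastCases with
      | last => exact absurd hij (lt_irrefl _)
      | cast j => exact h₂ j
    | cast i => induction j using Fin.lastCases with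
      | last => exact absurd hij (Fin.castSucc_lt_last i).asymm
      | cast j => exact h₁ (Fin.castSucc_lt_castSucc_iff.1 hij)

theorem submatrix_finSumFinEquiv_eq_fromBlocks {R : Type*} [Semiring R]
    {T : Matrix (Fin (n + 1)) (Fin (n + 1)) R}
    (hT : ∀ j : Fin n, T (Fin.last n) j.castSucc = 0) :
    T.submatrix finSumFinEquiv finSumFinEquiv =
      fromBlocks (T.submatrix Fin.castSucc Fin.castSucc)
        (T.submatrix Fin.castSucc fun _ => Fin.last n) 0 (T (Fin.last n) (Fin.last n) • 1) := by
  ext (i | i) (j | j)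
  · rfl
  · rw [Subsingleton.elim j 0]; rfl
  · rw [Subsingleton.elim i 0]; exact hT j
  · rw [Subsingleton.elim i 0, Subsingleton.elim j 0]; simp; rfl

theorem submatrix_finSumFinEquiv_eq_fromCols {ι R : Type*} (Φ : Matrix ι (Fin (n + 1)) R) :
    Φ.submatrix id finSumFinEquiv =
      fromCols (Φ.submatrix id Fin.castSucc) (replicateCol (Fin 1) (Φᵀ (Fin.last n))) := by
  ext i (j | j)
  · rfl
  · rw [Subsingleton.elim j 0]; rfl

end LastIndex

section Schur

theorem exists_unitary_last_row_eq_zero {n : ℕ} (A : Matrix (Fin (n + 1)) (Fin (n + 1)) ℂ) :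
    ∃ U ∈ unitary (Matrix (Fin (n + 1)) (Fin (n + 1)) ℂ),
      ∀ j : Fin n, (star U * A * U) (Fin.last n) j.castSucc = 0 := by
  obtain ⟨μ, hμ⟩ := Module.End.exists_eigenvalue (toLin' Aᴴ)
  obtain ⟨v, hv⟩ := hμ.exists_hasEigenvector
  have hv0 : WithLp.toLp 2 v ≠ 0 := by simpa using hv.2
  set u : EuclideanSpace ℂ (Fin (n + 1)) := (‖WithLp.toLp 2 v‖⁻¹ : ℂ) • WithLp.toLp 2 v
  have hAu : Aᴴ *ᵥ u.ofLp = μ • u.ofLp := by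
    have hAv : Aᴴ *ᵥ v = μ • v := by simpa using hv.apply_eq_smul
    simp only [u, WithLp.ofLp_smul, mulVec_smul, hAv, smul_comm μ]
  -- the last column of `U` is an eigenvector of `Aᴴ`, so `U* A U` has last row `(0, …, 0, μ̄)`
  obtain ⟨b, hb⟩ := Orthonormal.exists_orthonormalBasis_extension_of_card_eq (𝕜 := ℂ)
    (v := fun _ => u) (s := {Fin.last n}) (by simp)
    (orthonormal_subsingleton_iff.2 fun _ => norm_smul_inv_norm hv0)
  set U := (EuclideanSpace.basisFun (Fin (n + 1)) ℂ).toBasis.toMatrix b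
  have hcol : ∀ k, Uᵀ k = (b k).ofLp := fun k => by
    ext i
    simp [U, Module.Basis.toMatrix_apply]
  refine ⟨U, OrthonormalBasis.toMatrix_orthonormalBasis_mem_unitary _ _, fun j => ?_⟩
  have horth := (orthonormal_iff_ite.1 b.orthonormal) (Fin.last n) j.castSucc
  rw [if_neg (Fin.castSucc_lt_last j).ne', hb _ rfl,
    EuclideanSpace.inner_eq_star_dotProduct] at horth
  rw [star_eq_conjTranspose, conjTranspose_mul_mul_apply, hcol, hcol, hb _ rfl, dotProduct_mulVec,
    ← conjTranspose_conjTranspose A, ← star_mulVec, hAu, star_smul, smul_dotProduct,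
    dotProduct_comm, horth, smul_zero]

theorem exists_unitary_isUpperTriangular {n : ℕ} (A : Matrix (Fin n) (Fin n) ℂ) :
    ∃ U ∈ unitary (Matrix (Fin n) (Fin n) ℂ), (star U * A * U).IsUpperTriangular := by
  induction n with
  | zero => exact ⟨1, one_mem _, fun i => i.elim0⟩
  | succ n ih =>
    obtain ⟨U, hU, hB⟩ := exists_unitary_last_row_eq_zero A
    set e : Fin n ⊕ Fin 1 ≃ Fin (n + 1) := finSumFinEquiv
    set B := star U * A * U
    obtain ⟨V, hV, hT⟩ := ih (B.submatrix Fin.castSucc Fin.castSucc)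
    set W : Matrix (Fin n ⊕ Fin 1) (Fin n ⊕ Fin 1) ℂ := fromBlocks V 0 0 1
    set U' := U * W.submatrix e.symm e.symm
    refine ⟨U', mul_mem hU (submatrix_equiv_mem_unitary (fromBlocks_one_mem_unitary hV) _), ?_⟩
    have hconj : (star U' * A * U').submatrix e e =
        fromBlocks (star V * B.submatrix Fin.castSucc Fin.castSucc * V)
          (star V * B.submatrix Fin.castSucc fun _ => Fin.last n) 0
          (B (Fin.last n) (Fin.last n) • 1) := by
      rw [show star U' * A * U' = star (W.submatrix e.symm e.symm) * B * W.submatrix e.symm e.symm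
          by simp only [U', B, star_mul, Matrix.mul_assoc],
        ← submatrix_mul_equiv _ _ _ e, ← submatrix_mul_equiv _ _ _ e,
        submatrix_finSumFinEquiv_eq_fromBlocks hB]
      simp [W, star_eq_conjTranspose, conjTranspose_submatrix, fromBlocks_conjTranspose,
        fromBlocks_multiply]
    have h₁₁ : (star U' * A * U').submatrix Fin.castSucc Fin.castSucc =
        star V * B.submatrix Fin.castSucc Fin.castSucc * V :=
      congrArg toBlocks₁₁ hconj
    rw [isUpperTriangular_iff_castSucc]
    exact ⟨h₁₁ ▸ hT, fun j => congrFun₂ hconj (Sum.inr 0) (Sum.inl j)⟩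

end Schur

section Colligation

variable {m n o ι : Type*} [Fintype ι]

def IsColligation (A : Matrix n n ℂ) (Φ : Matrix ι n ℂ) (J : Matrix ι ι ℂ) : Prop :=
  Complex.I⁻¹ • (A - Aᴴ) = Φᴴ * J * Φ

def colligationCharFun [Fintype n] [DecidableEq n] [DecidableEq ι] (A : Matrix n n ℂ)
    (Φ : Matrix ι n ℂ) (J : Matrix ι ι ℂ) (z : ℂ) : Matrix ι ι ℂ :=
  1 - Complex.I • (Φ * (A - z • 1)⁻¹ * Φᴴ * J)

namespace IsColligation

variable {A : Matrix n n ℂ} {Φ : Matrix ι n ℂ} {J : Matrix ι ι ℂ}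

theorem star_col_dotProduct_mulVec_col (h : IsColligation A Φ J) (k : n) :
    star (Φᵀ k) ⬝ᵥ J *ᵥ Φᵀ k = 2 * (A k k).im := by
  rw [← conjTranspose_mul_mul_apply, ← h, Matrix.smul_apply, Matrix.sub_apply,
    conjTranspose_apply, smul_eq_mul, Complex.star_def, Complex.sub_conj, Complex.inv_I]
  push_cast
  linear_combination (-2 * ((A k k).im : ℂ)) * Complex.I_sq

theorem submatrix (h : IsColligation A Φ J) (f : m → n) :
    IsColligation (A.submatrix f f) (Φ.submatrix id f) J :=
  calc Complex.I⁻¹ • (A.submatrix f f - (A.submatrix f f)ᴴ)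
      = (Complex.I⁻¹ • (A - Aᴴ)).submatrix f f := by
        rw [conjTranspose_submatrix]; rfl
    _ = (Φ.submatrix id f)ᴴ * J * Φ.submatrix id f := by
      rw [h, submatrix_mul _ _ _ id _ Function.bijective_id,
        submatrix_mul _ _ _ id _ Function.bijective_id, submatrix_id_id, conjTranspose_submatrix]

theorem star_mul_mul [Fintype n] (h : IsColligation A Φ J) (U : Matrix n n ℂ) :
    IsColligation (star U * A * U) (Φ * U) J :=
  calc Complex.I⁻¹ • (star U * A * U - (star U * A * U)ᴴ)
      = star U * (Complex.I⁻¹ • (A - Aᴴ)) * U := by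
        simp [conjTranspose_mul, Matrix.mul_sub, Matrix.sub_mul, Matrix.mul_assoc,
          star_eq_conjTranspose]
    _ = (Φ * U)ᴴ * J * (Φ * U) := by
        rw [h]; simp [conjTranspose_mul, Matrix.mul_assoc, star_eq_conjTranspose]

theorem eq_smul_of_fromBlocks {A₁ : Matrix m m ℂ} {C : Matrix m o ℂ} {A₂ : Matrix o o ℂ}
    {Φ₁ : Matrix ι m ℂ} {Φ₂ : Matrix ι o ℂ}
    (h : IsColligation (fromBlocks A₁ C 0 A₂) (fromCols Φ₁ Φ₂) J) :
    C = Complex.I • (Φ₁ᴴ * J * Φ₂) := by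
  have h₁₂ := congrArg toBlocks₁₂ h
  rw [fromBlocks_conjTranspose, conjTranspose_fromCols_eq_fromRows_conjTranspose, fromRows_mul,
    fromRows_mul_fromCols, toBlocks_fromBlocks₁₂] at h₁₂
  rw [← h₁₂]
  ext i j
  simp [toBlocks₁₂, ← mul_assoc]

theorem two_mul_sum_abs_im_le_re_trace [Fintype n] [DecidableEq ι] (h : IsColligation A Φ J)
    (hJ : Jᴴ * J = 1) :
    2 * ∑ k, |(A k k).im| ≤ (trace (Φ * Φᴴ)).re := by
  rw [mul_conjTranspose_eq_sum_vecMulVec, trace_sum, Complex.re_sum, Finset.mul_sum]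
  gcongr with k
  rw [trace_vecMulVec, dotProduct_comm]
  calc 2 * |(A k k).im| = ‖star (Φᵀ k) ⬝ᵥ J *ᵥ Φᵀ k‖ := by
        rw [h.star_col_dotProduct_mulVec_col]; simp
    _ ≤ _ := norm_star_dotProduct_mulVec_le hJ _

end IsColligation

variable [DecidableEq ι]

theorem colligationCharFun_submatrix_equiv [Fintype m] [DecidableEq m] [Fintype n]
    [DecidableEq n] (A : Matrix n n ℂ) (Φ : Matrix ι n ℂ) (J : Matrix ι ι ℂ) (z : ℂ)
    (e : m ≃ n) :
    colligationCharFun (A.submatrix e e) (Φ.submatrix id e) J z = colligationCharFun A Φ J z := by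
  rw [colligationCharFun, ← submatrix_sub_smul_one_equiv, inv_submatrix_equiv,
    conjTranspose_submatrix, submatrix_mul_equiv, submatrix_mul_equiv, submatrix_id_id,
    colligationCharFun]

theorem colligationCharFun_star_mul_mul [Fintype n] [DecidableEq n] (A : Matrix n n ℂ)
    (Φ : Matrix ι n ℂ) (J : Matrix ι ι ℂ) (z : ℂ) {U : Matrix n n ℂ}
    (hU : U ∈ unitary (Matrix n n ℂ)) :
    colligationCharFun (star U * A * U) (Φ * U) J z = colligationCharFun A Φ J z := by
  have hinv : (star U)⁻¹ = U := inv_eq_left_inv (Unitary.mul_star_self_of_mem hU)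
  have hinv' : U⁻¹ = star U := inv_eq_left_inv (Unitary.star_mul_self_of_mem hU)
  rw [colligationCharFun, star_mul_mul_sub_smul_one hU, Matrix.mul_inv_rev, Matrix.mul_inv_rev,
    hinv, hinv', conjTranspose_mul, ← star_eq_conjTranspose U]
  simp only [Matrix.mul_assoc]
  rw [← Matrix.mul_assoc U, Unitary.mul_star_self_of_mem hU, Matrix.one_mul,
    ← Matrix.mul_assoc U, Unitary.mul_star_self_of_mem hU, Matrix.one_mul]
  simp only [colligationCharFun, Matrix.mul_assoc]

theorem colligationCharFun_smul_one [Fintype n] [DecidableEq n] (μ : ℂ) (Φ : Matrix ι n ℂ)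
    (J : Matrix ι ι ℂ) (z : ℂ) :
    colligationCharFun (μ • 1) Φ J z = 1 + (Complex.I / (z - μ)) • (Φ * Φᴴ * J) := by
  rcases eq_or_ne μ z with rfl | hμ
  · simp [colligationCharFun]
  have hinv : ((μ - z) • (1 : Matrix n n ℂ))⁻¹ = (μ - z)⁻¹ • 1 :=
    inv_eq_left_inv (by simp [smul_smul, mul_inv_cancel₀ (sub_ne_zero.2 hμ)])
  rw [colligationCharFun, ← sub_smul, hinv]
  simp only [Matrix.mul_smul, Matrix.smul_mul, Matrix.mul_one, smul_smul]
  rw [sub_eq_add_neg, ← neg_smul]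
  congr 2
  rw [← neg_sub z μ]
  field_simp

theorem colligationCharFun_fromBlocks [Fintype m] [DecidableEq m] [Fintype o] [DecidableEq o]
    {A₁ : Matrix m m ℂ} {C : Matrix m o ℂ} {A₂ : Matrix o o ℂ} {Φ₁ : Matrix ι m ℂ}
    {Φ₂ : Matrix ι o ℂ} {J : Matrix ι ι ℂ}
    (h : IsColligation (fromBlocks A₁ C 0 A₂) (fromCols Φ₁ Φ₂) J) {z : ℂ}
    (h₁ : IsUnit (A₁ - z • 1)) (h₂ : IsUnit (A₂ - z • 1)) :
    colligationCharFun (fromBlocks A₁ C 0 A₂) (fromCols Φ₁ Φ₂) J z =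
      colligationCharFun A₁ Φ₁ J z * colligationCharFun A₂ Φ₂ J z := by
  rw [colligationCharFun, fromBlocks_zero₂₁_sub_smul_one,
    inv_fromBlocks_zero₂₁_of_isUnit_iff _ _ _ (iff_of_true h₁ h₂),
    conjTranspose_fromCols_eq_fromRows_conjTranspose, fromCols_mul_fromBlocks,
    fromCols_mul_fromRows, h.eq_smul_of_fromBlocks]
  simp only [colligationCharFun, Matrix.mul_zero, add_zero, Matrix.add_mul, Matrix.mul_neg,
    Matrix.neg_mul, Matrix.mul_smul, Matrix.smul_mul, Matrix.mul_sub, Matrix.sub_mul,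
    Matrix.mul_one, Matrix.one_mul, Matrix.mul_assoc]
  module

theorem colligationCharFun_eq_prod_of_isUpperTriangular {n : ℕ}
    {T : Matrix (Fin n) (Fin n) ℂ} (hT : T.IsUpperTriangular) {Φ : Matrix ι (Fin n) ℂ}
    {J : Matrix ι ι ℂ} (h : IsColligation T Φ J) {z : ℂ} (hz : IsUnit (T - z • 1)) :
    colligationCharFun T Φ J z =
      (List.ofFn fun k =>
        1 + (Complex.I / (z - T k k)) • (vecMulVec (Φᵀ k) (star (Φᵀ k)) * J)).prod := by
  induction n with
  | zero => simp [colligationCharFun, mul_empty]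
  | succ n ih =>
    obtain ⟨hT₁, hT₂⟩ := (isUpperTriangular_iff_castSucc T).1 hT
    have hsplit := submatrix_finSumFinEquiv_eq_fromBlocks hT₂
    have hzB := (isUnit_submatrix_equiv finSumFinEquiv finSumFinEquiv).2 hz
    rw [submatrix_sub_smul_one_equiv, hsplit, fromBlocks_zero₂₁_sub_smul_one,
      isUnit_fromBlocks_zero₂₁] at hzB
    have hcolB := h.submatrix finSumFinEquiv
    rw [hsplit, submatrix_finSumFinEquiv_eq_fromCols] at hcolB
    rw [← colligationCharFun_submatrix_equiv T Φ J z finSumFinEquiv, hsplit,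
      submatrix_finSumFinEquiv_eq_fromCols, colligationCharFun_fromBlocks hcolB hzB.1 hzB.2,
      ih hT₁ (h.submatrix Fin.castSucc) hzB.1, colligationCharFun_smul_one,
      conjTranspose_replicateCol, List.ofFn_succ', List.prod_concat, vecMulVec_eq (Fin 1)]
    rfl

end Colligation

theorem statement12_general
    (n r : ℕ)
    (A : Matrix (Fin n) (Fin n) ℂ) (Φ : Matrix (Fin r) (Fin n) ℂ)
    (J : Matrix (Fin r) (Fin r) ℂ)
    (hJsa : J.conjTranspose = J) (hJinv : J * J = 1)
    (hcol : Complex.I⁻¹ • (A - A.conjTranspose) = Φ.conjTranspose * J * Φ) :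
    ∃ (lam : Fin n → ℂ) (η : Fin n → Fin r → ℂ),
      (A.charpoly = ∏ k : Fin n, (Polynomial.X - Polynomial.C (lam k))) ∧
      (∀ k : Fin n, dotProduct (star (η k)) (J.mulVec (η k)) = 2 * (lam k).im) ∧
      (∑ k : Fin n, Matrix.vecMulVec (η k) (star (η k)) = Φ * Φ.conjTranspose) ∧
      (2 * ∑ k : Fin n, |(lam k).im| ≤ (Matrix.trace (Φ * Φ.conjTranspose)).re) ∧
      (∀ z : ℂ, (A - z • (1 : Matrix (Fin n) (Fin n) ℂ)).det ≠ 0 →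
        (1 : Matrix (Fin r) (Fin r) ℂ) -
            Complex.I • (Φ * (A - z • (1 : Matrix (Fin n) (Fin n) ℂ))⁻¹ * Φ.conjTranspose * J) =
          (List.ofFn fun k : Fin n =>
            (1 : Matrix (Fin r) (Fin r) ℂ) +
              (Complex.I / (z - lam k)) • (Matrix.vecMulVec (η k) (star (η k)) * J)).prod) := by
  obtain ⟨U, hU, hT⟩ := exists_unitary_isUpperTriangular A
  have hcolT : IsColligation (star U * A * U) (Φ * U) J := IsColligation.star_mul_mul hcol U
  have hΦU : Φ * U * (Φ * U)ᴴ = Φ * Φᴴ := by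
    rw [conjTranspose_mul, Matrix.mul_assoc, ← Matrix.mul_assoc U, ← star_eq_conjTranspose U,
      Unitary.mul_star_self_of_mem hU, Matrix.one_mul]
  refine ⟨fun k => (star U * A * U) k k, fun k => (Φ * U)ᵀ k, ?_,
    hcolT.star_col_dotProduct_mulVec_col, ?_, ?_, fun z hz => ?_⟩
  · rw [← Matrix.charpoly_of_isUpperTriangular _ hT, Matrix.charpoly_mul_comm,
      ← Matrix.mul_assoc, Unitary.mul_star_self_of_mem hU, Matrix.one_mul]
  · rw [← mul_conjTranspose_eq_sum_vecMulVec, hΦU]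
  · rw [← hΦU]
    exact hcolT.two_mul_sum_abs_im_le_re_trace (by rw [hJsa, hJinv])
  · have hunit : IsUnit (star U * A * U - z • 1) := by
      rw [star_mul_mul_sub_smul_one hU]
      exact ((IsUnit.of_mul_eq_one _ (Unitary.star_mul_self_of_mem hU)).mul
        ((isUnit_iff_isUnit_det _).2 (isUnit_iff_ne_zero.2 hz))).mul
        (IsUnit.of_mul_eq_one _ (Unitary.mul_star_self_of_mem hU))
    rw [← colligationCharFun, ← colligationCharFun_star_mul_mul A Φ J z hU]
    exact colligationCharFun_eq_prod_of_isUpperTriangular hT hcolT hunit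

/-- Multiplicative (Blaschke–Potapov) representation of the characteristic function of a matrix
colligation: for an `n×n` matrix `A` embedded in a colligation with external space `ℂ^r`, there
is an enumeration `λ₁, …, λₙ` of the eigenvalues of `A` (with algebraic multiplicity, i.e. the
characteristic polynomial factors accordingly) and vectors `η₁, …, ηₙ ∈ ℂ^r` with
`ηₖ* J ηₖ = 2 Im λₖ`, `∑ ηₖ ηₖ* = Φ Φ*`, `2 ∑ |Im λₖ| ≤ tr (Φ Φ*)`, and the characteristic
function factorizes into elementary Blaschke–Potapov factors. -/
theorem statement12
    (n r : ℕ) (hn : 1 ≤ n) (hr : 1 ≤ r)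
    (A : Matrix (Fin n) (Fin n) ℂ) (Φ : Matrix (Fin r) (Fin n) ℂ)
    (J : Matrix (Fin r) (Fin r) ℂ)
    (hJsa : J.conjTranspose = J) (hJinv : J * J = 1)
    (hcol : Complex.I⁻¹ • (A - A.conjTranspose) = Φ.conjTranspose * J * Φ) :
    ∃ (lam : Fin n → ℂ) (η : Fin n → Fin r → ℂ),
      (A.charpoly = ∏ k : Fin n, (Polynomial.X - Polynomial.C (lam k))) ∧
      (∀ k : Fin n, dotProduct (star (η k)) (J.mulVec (η k)) = 2 * (lam k).im) ∧
      (∑ k : Fin n, Matrix.vecMulVec (η k) (star (η k)) = Φ * Φ.conjTranspose) ∧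
      (2 * ∑ k : Fin n, |(lam k).im| ≤ (Matrix.trace (Φ * Φ.conjTranspose)).re) ∧
      (∀ z : ℂ, (A - z • (1 : Matrix (Fin n) (Fin n) ℂ)).det ≠ 0 →
        (1 : Matrix (Fin r) (Fin r) ℂ) -
            Complex.I • (Φ * (A - z • (1 : Matrix (Fin n) (Fin n) ℂ))⁻¹ * Φ.conjTranspose * J) =
          (List.ofFn fun k : Fin n =>
            (1 : Matrix (Fin r) (Fin r) ℂ) +
              (Complex.I / (z - lam k)) • (Matrix.vecMulVec (η k) (star (η k)) * J)).prod) :=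
  statement12_general n r A Φ J hJsa hJinv hcol
end
end

section
/- Let 𝒜 be a complex unital Banach algebra with ‖1‖ = 1, and let (H_j)_{j≥1} be a sequence in 𝒜 with ∑_{j=1}^∞ ‖H_j‖ < ∞. Then the sequence of partial products C_n = exp(H1) exp(H2) ⋯ exp(Hn) converges in norm to some C ∈ 𝒜, the sequence of reversed partial products D_n = exp(−Hn) ⋯ exp(−H2) exp(−H1) converges in norm to some D ∈ 𝒜, and C D = D C = 1, so C is invertible with C⁻¹ = D. -/
/-!
Every partial product `Cₙ = exp H₀ ⋯ exp Hₙ₋₁` has norm at most `exp (∑ ‖Hⱼ‖)`, and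
`‖exp x - 1‖ ≤ ‖x‖ exp ‖x‖`, so consecutive partial products differ by a summable amount and
`(Cₙ)` is Cauchy. The reversed products `Dₙ` are two-sided inverses of the `Cₙ` with the same
bound, and `Dₘ - Dₙ = Dₘ (Cₙ - Cₘ) Dₙ` makes `(Dₙ)` Cauchy too; the identities
`Cₙ Dₙ = Dₙ Cₙ = 1` pass to the limit.
-/

open NormedSpace Nat

theorem List.prod_ofFn_mul_prod_reverse_ofFn_eq_one {M : Type*} [Monoid M] :
    ∀ {n : ℕ} {f g : Fin n → M}, (∀ i, f i * g i = 1) →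
      (List.ofFn f).prod * (List.ofFn g).reverse.prod = 1
  | 0, _, _, _ => by simp
  | n + 1, f, g, h => by
    have ih := prod_ofFn_mul_prod_reverse_ofFn_eq_one (fun i => h (Fin.castSucc i))
    simp only [List.ofFn_succ', List.concat_eq_append, List.prod_append, List.reverse_append,
      List.prod_cons, List.prod_nil, mul_one, List.reverse_cons, List.reverse_nil,
      List.nil_append, List.singleton_append] at ih ⊢
    rw [mul_assoc, ← mul_assoc (f (Fin.last n)), h, one_mul, ih]

theorem List.prod_reverse_ofFn_mul_prod_ofFn_eq_one {M : Type*} [Monoid M] :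
    ∀ {n : ℕ} {f g : Fin n → M}, (∀ i, g i * f i = 1) →
      (List.ofFn g).reverse.prod * (List.ofFn f).prod = 1
  | 0, _, _, _ => by simp
  | n + 1, f, g, h => by
    have ih := prod_reverse_ofFn_mul_prod_ofFn_eq_one (fun i => h (Fin.succ i))
    simp only [List.ofFn_succ, List.reverse_cons, List.prod_append, List.prod_cons,
      List.prod_nil, mul_one] at ih ⊢
    rw [mul_assoc, ← mul_assoc (g 0), h, one_mul, ih]

theorem List.norm_prod_reverse_le {R : Type*} [SeminormedRing R] [NormOneClass R] (l : List R) :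
    ‖l.reverse.prod‖ ≤ (l.map norm).prod := by
  simpa only [List.map_reverse, List.prod_reverse] using List.norm_prod_le l.reverse

theorem CauchySeq.of_mul_eq_one {R : Type*} [NormedRing R] {c d : ℕ → R} (hc : CauchySeq c)
    {M : ℝ} (hd : ∀ n, ‖d n‖ ≤ M) (hcd : ∀ n, c n * d n = 1) (hdc : ∀ n, d n * c n = 1) :
    CauchySeq d := by
  obtain ⟨b, hb_nonneg, hb_bound, hb_lim⟩ := cauchySeq_iff_le_tendsto_0.1 hc
  refine cauchySeq_iff_le_tendsto_0.2
    ⟨fun N => M * M * b N, fun N => mul_nonneg (mul_self_nonneg M) (hb_nonneg N), ?_, ?_⟩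
  · intro m n N hm hn
    have hM : 0 ≤ M := (norm_nonneg _).trans (hd 0)
    have key : d m - d n = d m * (c n - c m) * d n := by
      rw [mul_sub, sub_mul, mul_assoc, hcd, mul_one, hdc, one_mul]
    calc dist (d m) (d n) = ‖d m * (c n - c m) * d n‖ := by rw [dist_eq_norm, key]
      _ ≤ ‖d m‖ * ‖c n - c m‖ * ‖d n‖ := norm_mul₃_le
      _ ≤ M * b N * M := by
          have hcb : ‖c n - c m‖ ≤ b N := by rw [← dist_eq_norm]; exact hb_bound n m N hn hm
          exact mul_le_mul (mul_le_mul (hd m) hcb (norm_nonneg _) hM) (hd n) (norm_nonneg _)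
            (mul_nonneg hM (hb_nonneg N))
      _ = M * M * b N := by ring
  · simpa using hb_lim.const_mul (M * M)

section Exp

variable {𝔸 : Type*} [NormedRing 𝔸] [NormedAlgebra ℚ 𝔸] [CompleteSpace 𝔸]

theorem NormedSpace.norm_exp_sub_one_le (x : 𝔸) : ‖exp x - 1‖ ≤ Real.exp ‖x‖ - 1 := by
  have hx := (hasSum_nat_add_iff' 1).2 (exp_series_hasSum_exp' (𝕂 := ℚ) x)
  have ht := (hasSum_nat_add_iff' 1).2 (expSeries_div_hasSum_exp ‖x‖)
  simp only [Finset.range_one, Finset.sum_singleton, pow_zero, factorial_zero, cast_one,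
    inv_one, one_smul, div_one, ← Real.exp_eq_exp_ℝ] at hx ht
  refine hx.norm_le_of_bounded ht fun n => ?_
  rw [norm_smul, norm_inv, div_eq_inv_mul, ← Rat.norm_cast_real, Rat.cast_natCast,
    Real.norm_natCast]
  gcongr
  exact norm_pow_le' x n.succ_pos

theorem NormedSpace.norm_exp_sub_one_le_mul_exp (x : 𝔸) :
    ‖exp x - 1‖ ≤ ‖x‖ * Real.exp ‖x‖ := by
  have h := mul_le_mul_of_nonneg_right (Real.add_one_le_exp (-‖x‖)) (Real.exp_pos ‖x‖).le
  rw [← Real.exp_add, neg_add_cancel, Real.exp_zero] at h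
  linarith [norm_exp_sub_one_le x]

theorem NormedSpace.norm_exp_le [NormOneClass 𝔸] (x : 𝔸) : ‖exp x‖ ≤ Real.exp ‖x‖ :=
  calc ‖exp x‖ = ‖1 + (exp x - 1)‖ := by rw [add_sub_cancel]
    _ ≤ ‖(1 : 𝔸)‖ + ‖exp x - 1‖ := norm_add_le _ _
    _ ≤ 1 + (Real.exp ‖x‖ - 1) := by rw [norm_one]; gcongr; exact norm_exp_sub_one_le x
    _ = Real.exp ‖x‖ := by ring

theorem NormedSpace.exp_mul_exp_neg (x : 𝔸) : exp x * exp (-x) = 1 := by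
  rw [← exp_add_of_commute (Commute.refl x).neg_right, add_neg_cancel, exp_zero]

theorem NormedSpace.exp_neg_mul_exp (x : 𝔸) : exp (-x) * exp x = 1 := by
  rw [← exp_add_of_commute (Commute.refl x).neg_left, neg_add_cancel, exp_zero]

variable [NormOneClass 𝔸] {H : ℕ → 𝔸}

theorem NormedSpace.prod_map_norm_ofFn_exp_le (hH : Summable (‖H ·‖)) (n : ℕ) :
    ((List.ofFn fun i : Fin n => exp (H i)).map norm).prod ≤ Real.exp (∑' j, ‖H j‖) := by
  rw [List.map_ofFn, List.prod_ofFn]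
  calc ∏ i : Fin n, ‖exp (H i)‖ ≤ ∏ i : Fin n, Real.exp ‖H i‖ :=
        Finset.prod_le_prod (fun _ _ => norm_nonneg _) fun i _ => norm_exp_le (H i)
    _ = Real.exp (∑ j ∈ Finset.range n, ‖H j‖) := by
        rw [← Real.exp_sum, Fin.sum_univ_eq_sum_range (‖H ·‖)]
    _ ≤ Real.exp (∑' j, ‖H j‖) :=
        Real.exp_le_exp.2 (hH.sum_le_tsum _ fun j _ => norm_nonneg (H j))

theorem NormedSpace.cauchySeq_prod_ofFn_exp (hH : Summable (‖H ·‖)) :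
    CauchySeq fun n => (List.ofFn fun i : Fin n => exp (H i)).prod := by
  set S := ∑' j, ‖H j‖
  refine cauchySeq_of_dist_le_of_summable (fun n => Real.exp S * (‖H n‖ * Real.exp S))
    (fun n => ?_) ((hH.mul_right _).mul_left _)
  set P := (List.ofFn fun i : Fin n => exp (H i)).prod
  have hP : ‖P‖ ≤ Real.exp S := (List.norm_prod_le _).trans (prod_map_norm_ofFn_exp_le hH n)
  have hH_le : ‖H n‖ ≤ S := hH.le_tsum n fun j _ => norm_nonneg (H j)
  rw [List.ofFn_succ', List.prod_concat, dist_eq_norm']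
  calc ‖P * exp (H n) - P‖ = ‖P * (exp (H n) - 1)‖ := by rw [mul_sub, mul_one]
    _ ≤ ‖P‖ * ‖exp (H n) - 1‖ := norm_mul_le _ _
    _ ≤ Real.exp S * (‖H n‖ * Real.exp S) := by
        gcongr
        exact (norm_exp_sub_one_le_mul_exp (H n)).trans (by gcongr)

end Exp

/-- Convergence of infinite products of exponentials: if `∑ ‖Hⱼ‖ < ∞` in a unital Banach
algebra, the partial products `Cₙ = exp H₀ ⋯ exp Hₙ₋₁` converge to some `C`, the reversed
partial products `Dₙ = exp (-Hₙ₋₁) ⋯ exp (-H₀)` converge to some `D`, and `C D = D C = 1`. -/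
theorem statement14
    {𝒜 : Type*} [NormedRing 𝒜] [NormedAlgebra ℂ 𝒜] [CompleteSpace 𝒜] [NormOneClass 𝒜]
    (H : ℕ → 𝒜) (hsum : Summable fun j => ‖H j‖) :
    ∃ C D : 𝒜,
      Filter.Tendsto (fun n : ℕ => (List.ofFn fun i : Fin n => (NormedSpace.expSeries ℂ 𝒜).sum (H i)).prod)
        Filter.atTop (nhds C) ∧
      Filter.Tendsto
        (fun n : ℕ => ((List.ofFn fun i : Fin n => (NormedSpace.expSeries ℂ 𝒜).sum (-H i)).reverse).prod)
        Filter.atTop (nhds D) ∧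
      C * D = 1 ∧ D * C = 1 := by
  let : NormedAlgebra ℚ 𝒜 := NormedAlgebra.restrictScalars ℚ ℂ 𝒜
  rw [← exp_eq_expSeries_sum ℂ]
  set C := fun n : ℕ => (List.ofFn fun i : Fin n => exp (H i)).prod
  set D := fun n : ℕ => (List.ofFn fun i : Fin n => exp (-H i)).reverse.prod
  have hCD (n : ℕ) : C n * D n = 1 :=
    List.prod_ofFn_mul_prod_reverse_ofFn_eq_one fun i => exp_mul_exp_neg (H i)
  have hDC (n : ℕ) : D n * C n = 1 :=
    List.prod_reverse_ofFn_mul_prod_ofFn_eq_one fun i => exp_neg_mul_exp (H i)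
  have hD_le (n : ℕ) : ‖D n‖ ≤ Real.exp (∑' j, ‖H j‖) := by
    simpa only [norm_neg] using (List.norm_prod_reverse_le _).trans
      (prod_map_norm_ofFn_exp_le (H := (-H ·)) (by simpa only [norm_neg] using hsum) n)
  have hC : CauchySeq C := cauchySeq_prod_ofFn_exp hsum
  obtain ⟨c, hc⟩ := cauchySeq_tendsto_of_complete hC
  obtain ⟨d, hd⟩ := cauchySeq_tendsto_of_complete (hC.of_mul_eq_one hD_le hCD hDC)
  refine ⟨c, d, hc, hd, tendsto_nhds_unique (hc.mul hd) ?_, tendsto_nhds_unique (hd.mul hc) ?_⟩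
  · simpa only [hCD] using tendsto_const_nhds
  · simpa only [hDC] using tendsto_const_nhds
end

section
/- Let ℓ > 0 and let 𝕀 : L²(0, ℓ) → L²(0, ℓ) be the integration operator (𝕀 f)(x) = i ∫_x^ℓ f(t) dt. Then: (i) the spectrum of 𝕀 is {0}; (ii) for every z ∈ ℂ with z ≠ 0, the operator 𝕀 − z I is invertible and ((𝕀 − z I)⁻¹ f)(x) = −(1/z) f(x) − (i/z²) ∫_x^ℓ e^{(i/z)(t − x)} f(t) dt for a.e. x; (iii) with h0 the constant function h0(x) = 1/√ℓ on (0, ℓ), one has 1 − i ℓ ⟨(𝕀 − z I)⁻¹ h0, h0⟩ = e^{i ℓ / z} for every z ≠ 0. -/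
noncomputable section

open MeasureTheory

def muI (l : ℝ) : Measure ℝ := volume.restrict (Set.Ioo 0 l)

/-!
Write `V_a` for the Volterra operator `f ↦ i ∫_x^ℓ e^{a(t-x)} f(t) dt`, so that `𝕀 = V_0`.
Conjugating `𝕀` by multiplication with `e^{ct}` shows that every `V_c` is a bounded operator on
`L²(0, ℓ)`, and Fubini gives `(a - b) V_a V_b = i (V_a - V_b)`. For `A = V_{i/z}` this reads
`𝕀 A = A 𝕀 = z (A - 𝕀)`, so `-z⁻¹ - z⁻² A` is a two-sided inverse of `𝕀 - z`, whose kernel is the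
one claimed. Hence the spectrum is contained in `{0}`, and it is nonempty because `𝕀` lives in a
nontrivial complex Banach algebra. The identity for `h0` is a direct evaluation of that kernel.
-/

open Complex Set

theorem integral_Ioi_mul_integral_Ioi {𝕜 : Type*} [RCLike 𝕜] {μ : Measure ℝ} [SFinite μ]
    {g h : ℝ → 𝕜} (hg : Integrable g μ) (hh : Integrable h μ) (x : ℝ) :
    ∫ t in Ioi x, g t * ∫ s in Ioi t, h s ∂μ ∂μ =
      ∫ s in Ioi x, (∫ t in Ioo x s, g t ∂μ) * h s ∂μ := by
  set T : Set (ℝ × ℝ) := {p | x < p.1 ∧ p.1 < p.2}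
  have hT : MeasurableSet T :=
    (measurable_fst measurableSet_Ioi).inter (measurableSet_lt measurable_fst measurable_snd)
  have hF : Integrable (T.indicator fun p => g p.1 * h p.2) (μ.prod μ) :=
    (hg.mul_prod hh).indicator hT
  have hfst : ∀ t, ∫ s, T.indicator (fun p => g p.1 * h p.2) (t, s) ∂μ =
      (Ioi x).indicator (fun t => g t * ∫ s in Ioi t, h s ∂μ) t := by
    intro t
    by_cases hxt : x < t
    · simp only [T, indicator_apply, mem_ofPred_eq, mem_Ioi, hxt, true_and, if_true]
      rw [← integral_const_mul, ← integral_indicator measurableSet_Ioi]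
      simp only [indicator_apply, mem_Ioi]
    · simp [T, hxt]
  have hsnd : ∀ s, ∫ t, T.indicator (fun p => g p.1 * h p.2) (t, s) ∂μ =
      (Ioi x).indicator (fun s => (∫ t in Ioo x s, g t ∂μ) * h s) s := by
    intro s
    by_cases hxs : x < s
    · simp only [T, indicator_apply, mem_ofPred_eq, mem_Ioi, hxs, if_true]
      rw [← integral_mul_const, ← integral_indicator measurableSet_Ioo]
      simp only [indicator_apply, mem_Ioo]
    · have : ∀ t, ¬ (x < t ∧ t < s) := fun t h => hxs (h.1.trans h.2)
      simp [T, hxs, this]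
  rw [← integral_indicator measurableSet_Ioi, ← integral_indicator measurableSet_Ioi,
    ← funext hfst, ← funext hsnd, ← integral_prod _ hF, integral_prod_symm _ hF]

theorem isUnit_sub_smul_one_of_mul_eq {𝕜 R : Type*} [Field 𝕜] [Ring R] [Algebra 𝕜 R] {z : 𝕜}
    (hz : z ≠ 0) {A B : R} (hBA : B * A = z • (A - B)) (hAB : A * B = z • (A - B)) :
    IsUnit (B - z • 1) ∧ Ring.inverse (B - z • 1) = -z⁻¹ • 1 - z⁻¹ ^ 2 • A := by
  let u : Rˣ :=
    { val := B - z • 1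
      inv := -z⁻¹ • 1 - z⁻¹ ^ 2 • A
      val_inv := by
        simp only [mul_sub, sub_mul, smul_mul_assoc, mul_smul_comm, mul_one, one_mul, hBA]
        match_scalars <;> field_simp <;> ring
      inv_val := by
        simp only [mul_sub, sub_mul, smul_mul_assoc, mul_smul_comm, mul_one, one_mul, hAB]
        match_scalars <;> field_simp <;> ring }
  exact ⟨u.isUnit, Ring.inverse_unit u⟩

theorem spectrum_eq_singleton_zero_of_isUnit {A : Type*} [NormedRing A] [NormedAlgebra ℂ A]
    [CompleteSpace A] [Nontrivial A] {a : A} (h : ∀ z : ℂ, z ≠ 0 → IsUnit (a - z • 1)) :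
    spectrum ℂ a = {0} := by
  refine (spectrum.nonempty a).subset_singleton_iff.1 fun z hz => ?_
  by_contra hz0
  refine spectrum.mem_iff.1 hz ?_
  rw [Algebra.algebraMap_eq_smul_one, ← neg_sub]
  exact (h z hz0).neg

lemma MeasureTheory.Lp.ne_zero_of_ae_eq_const {α E : Type*} [MeasurableSpace α]
    [NormedAddCommGroup E] {p : ENNReal} {μ : Measure α} (hμ : μ ≠ 0) {f : Lp E p μ} {c : E}
    (hc : c ≠ 0) (hf : ∀ᵐ x ∂μ, f x = c) : f ≠ 0 := by
  rintro rfl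
  have := ae_neBot.2 hμ
  obtain ⟨x, hx0, hxc⟩ := ((Lp.coeFn_zero E p μ).and hf).exists
  exact hc (hxc.symm.trans hx0)

variable {l : ℝ}

instance : IsFiniteMeasure (muI l) := by
  unfold muI; infer_instance

lemma muI_ne_zero (hl : 0 < l) : muI l ≠ 0 := by
  intro h
  have := congrArg (· univ) h
  simp only [muI, Measure.restrict_apply_univ, Real.volume_Ioo, sub_zero,
    Measure.coe_zero, Pi.zero_apply, ENNReal.ofReal_eq_zero] at this
  linarith

lemma restrict_muI_of_subset {s : Set ℝ} (hs : s ⊆ Ioo 0 l) :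
    (muI l).restrict s = volume.restrict s :=
  Measure.restrict_restrict_of_subset hs

lemma restrict_Ioi_muI {x : ℝ} (hx : 0 ≤ x) :
    (muI l).restrict (Ioi x) = (muI l).restrict (Ioo x l) := by
  rw [muI, Measure.restrict_restrict measurableSet_Ioi, Measure.restrict_restrict measurableSet_Ioo,
    Ioi_inter_Ioo, max_eq_left hx, Ioo_inter_Ioo, max_eq_left hx, min_self]

lemma memLp_top_muI_of_continuous {E : Type*} [NormedAddCommGroup E] {g : ℝ → E}
    (hg : Continuous g) : MemLp g ⊤ (muI l) := by
  obtain ⟨C, hC⟩ :=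
    (isCompact_Icc (a := 0) (b := l)).exists_bound_of_continuousOn hg.continuousOn
  refine memLp_top_of_bound hg.aestronglyMeasurable C ?_
  filter_upwards [ae_restrict_mem measurableSet_Ioo] with x hx
  exact hC x (Ioo_subset_Icc_self hx)

lemma integrable_muI_of_Lp (f : Lp ℂ 2 (muI l)) : Integrable f (muI l) :=
  (Lp.memLp f).integrable (by norm_num)

lemma integrable_muI_continuous_mul {g f : ℝ → ℂ} (hg : Continuous g)
    (hf : Integrable f (muI l)) : Integrable (fun t => g t * f t) (muI l) :=
  hf.mul_of_top_right (memLp_top_muI_of_continuous hg)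

lemma integral_Ioo_muI_exp {c : ℂ} (hc : c ≠ 0) {a b : ℝ} (ha : 0 ≤ a) (hab : a ≤ b)
    (hb : b ≤ l) :
    ∫ t in Ioo a b, exp (c * t) ∂(muI l) = (exp (c * b) - exp (c * a)) / c := by
  rw [restrict_muI_of_subset (Ioo_subset_Ioo ha hb), ← integral_Ioc_eq_integral_Ioo,
    ← intervalIntegral.integral_of_le hab, integral_exp_mul_complex hc]

def expVolterra (l : ℝ) (a : ℂ) (f : ℝ → ℂ) (x : ℝ) : ℂ :=
  ∫ t in Ioi x, exp (a * (t - x)) * f t ∂(muI l)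

lemma expVolterra_eq (a : ℂ) (f : ℝ → ℂ) (x : ℝ) :
    expVolterra l a f x = exp (-(a * x)) * ∫ t in Ioi x, exp (a * t) * f t ∂(muI l) := by
  rw [expVolterra, ← integral_const_mul]
  congr 1 with t
  rw [← mul_assoc, ← exp_add]
  ring_nf

lemma expVolterra_congr_ae {f g : ℝ → ℂ} (h : f =ᵐ[muI l] g) (a : ℂ) (x : ℝ) :
    expVolterra l a f x = expVolterra l a g x :=
  integral_congr_ae <| ae_restrict_of_ae <| h.mono fun t ht => by simp only [ht]

lemma expVolterra_const_mul (a k : ℂ) (f : ℝ → ℂ) (x : ℝ) :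
    expVolterra l a (fun t => k * f t) x = k * expVolterra l a f x := by
  rw [expVolterra, expVolterra, ← integral_const_mul]
  congr 1 with t
  ring

lemma expVolterra_const {a : ℂ} (ha : a ≠ 0) (k : ℂ) {x : ℝ} (h0x : 0 ≤ x) (hxl : x ≤ l) :
    expVolterra l a (fun _ => k) x = k * (exp (a * (l - x)) - 1) / a := by
  rw [expVolterra_eq, restrict_Ioi_muI h0x, integral_mul_const,
    integral_Ioo_muI_exp ha h0x hxl le_rfl]
  have hinv : exp (-(a * x)) * exp (a * x) = 1 := by rw [← exp_add, neg_add_cancel, exp_zero]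
  rw [show a * (l - x) = -(a * x) + a * l by ring, exp_add]
  field_simp
  linear_combination (-k) * hinv

theorem sub_mul_expVolterra_expVolterra (a b : ℂ) {f : ℝ → ℂ} (hf : Integrable f (muI l))
    {x : ℝ} (hx : 0 ≤ x) :
    (a - b) * expVolterra l a (expVolterra l b f) x =
      expVolterra l a f x - expVolterra l b f x := by
  rcases eq_or_ne a b with rfl | hab
  · simp
  have hab' : a - b ≠ 0 := sub_ne_zero.2 hab
  have hebf : Integrable (fun s : ℝ => exp (b * s) * f s) (muI l) :=
    integrable_muI_continuous_mul (by fun_prop) hf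
  have hexp : Integrable (fun t : ℝ => exp ((a - b) * t)) (muI l) :=
    (memLp_top_muI_of_continuous (by fun_prop)).integrable le_top
  have hinner : ∀ᵐ s ∂(muI l).restrict (Ioi x), ∫ t in Ioo x s, exp ((a - b) * t) ∂(muI l) =
      (exp ((a - b) * s) - exp ((a - b) * x)) / (a - b) := by
    filter_upwards [ae_restrict_mem measurableSet_Ioi,
      ae_restrict_of_ae (ae_restrict_mem measurableSet_Ioo : ∀ᵐ s ∂(muI l), s ∈ Ioo 0 l)]
      with s hxs hs
    exact integral_Ioo_muI_exp hab' hx (le_of_lt hxs) hs.2.le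
  calc (a - b) * expVolterra l a (expVolterra l b f) x
      = (a - b) * (exp (-(a * x)) * ∫ t in Ioi x, exp ((a - b) * t) *
          ∫ s in Ioi t, exp (b * s) * f s ∂(muI l) ∂(muI l)) := by
        simp_rw [expVolterra_eq a, expVolterra_eq b, ← mul_assoc, ← exp_add]
        ring_nf
    _ = (a - b) * (exp (-(a * x)) * ∫ s in Ioi x,
          (exp ((a - b) * s) - exp ((a - b) * x)) / (a - b) * (exp (b * s) * f s) ∂(muI l)) := by
        rw [integral_Ioi_mul_integral_Ioi hexp hebf x]
        congr 2
        exact integral_congr_ae (hinner.mono fun s hs => by simp only [hs])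
    _ = ∫ s in Ioi x, (exp (a * (s - x)) * f s - exp (b * (s - x)) * f s) ∂(muI l) := by
        rw [← integral_const_mul, ← integral_const_mul]
        congr 1 with s
        have ea : exp (a * (s - x)) = exp (-(a * x)) * exp ((a - b) * s) * exp (b * s) := by
          rw [← exp_add, ← exp_add]; ring_nf
        have eb : exp (b * (s - x)) = exp (-(a * x)) * exp ((a - b) * x) * exp (b * s) := by
          rw [← exp_add, ← exp_add]; ring_nf
        rw [ea, eb]
        field_simp
    _ = expVolterra l a f x - expVolterra l b f x :=
        integral_sub (integrable_muI_continuous_mul (by fun_prop) hf).restrict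
          (integrable_muI_continuous_mul (by fun_prop) hf).restrict

def HasExpVolterraKernel (l : ℝ) (a : ℂ) (P : Lp ℂ 2 (muI l) →L[ℂ] Lp ℂ 2 (muI l)) : Prop :=
  ∀ f : Lp ℂ 2 (muI l), (P f : ℝ → ℂ) =ᵐ[muI l] fun x => I * expVolterra l a f x

lemma hasExpVolterraKernel_zero {P : Lp ℂ 2 (muI l) →L[ℂ] Lp ℂ 2 (muI l)}
    (hP : ∀ f : Lp ℂ 2 (muI l), ∀ᵐ x ∂(muI l),
      (P f : ℝ → ℂ) x = I * ∫ t in Ioi x, (f : ℝ → ℂ) t ∂(muI l)) :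
    HasExpVolterraKernel l 0 P := fun f =>
  (hP f).mono fun x hx => by simp only [hx, expVolterra, zero_mul, exp_zero, one_mul]

def expMul (l : ℝ) (c : ℂ) : Lp ℂ 2 (muI l) →L[ℂ] Lp ℂ 2 (muI l) :=
  ContinuousLinearMap.holderL (muI l) (⊤ : ENNReal) 2 2 (ContinuousLinearMap.mul ℂ ℂ)
    ((memLp_top_muI_of_continuous (g := fun t : ℝ => exp (c * t)) (by fun_prop)).toLp _)

lemma coeFn_expMul (c : ℂ) (f : Lp ℂ 2 (muI l)) :
    (expMul l c f : ℝ → ℂ) =ᵐ[muI l] fun t => exp (c * t) * f t := by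
  rw [expMul, ContinuousLinearMap.holderL_apply_apply]
  filter_upwards
    [ContinuousLinearMap.coeFn_holder (p := ⊤) (r := 2) (ContinuousLinearMap.mul ℂ ℂ) _ f,
    MemLp.coeFn_toLp (memLp_top_muI_of_continuous (g := fun t : ℝ => exp (c * t)) (by fun_prop))]
    with t ht hc
  rw [ht, ContinuousLinearMap.mul_apply', hc]

namespace HasExpVolterraKernel

variable {a b : ℂ} {P Q : Lp ℂ 2 (muI l) →L[ℂ] Lp ℂ 2 (muI l)}

theorem conj_expMul (hP : HasExpVolterraKernel l a P) (c : ℂ) :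
    HasExpVolterraKernel l (a + c) (expMul l (-c) ∘L P ∘L expMul l c) := fun f => by
  filter_upwards [coeFn_expMul (-c) (P (expMul l c f)), hP (expMul l c f)] with x h1 h2
  rw [ContinuousLinearMap.comp_apply, ContinuousLinearMap.comp_apply, h1, h2,
    expVolterra_congr_ae (coeFn_expMul c f), expVolterra_eq, expVolterra_eq]
  have hint : ∫ t in Ioi x, exp (a * t) * (exp (c * t) * f t) ∂(muI l) =
      ∫ t in Ioi x, exp ((a + c) * t) * f t ∂(muI l) := by
    congr 1 with t
    rw [← mul_assoc, ← exp_add, add_mul]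
  rw [hint, show -((a + c) * x) = -c * x + -(a * x) by ring, exp_add]
  ring

theorem mul_eq (hP : HasExpVolterraKernel l a P) (hQ : HasExpVolterraKernel l b Q)
    (hab : a ≠ b) : P * Q = (I / (a - b)) • (P - Q) := by
  ext f
  rw [ContinuousLinearMap.mul_def, ContinuousLinearMap.comp_apply, smul_apply, sub_apply]
  filter_upwards [hP (Q f), hP f, hQ f, Lp.coeFn_smul (I / (a - b)) (P f - Q f),
    Lp.coeFn_sub (P f) (Q f), ae_restrict_mem measurableSet_Ioo] with x hPQ hPx hQx hsmul hsub hx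
  have hcomp := sub_mul_expVolterra_expVolterra a b (integrable_muI_of_Lp f) hx.1.le
  rw [hPQ, hsmul, Pi.smul_apply, hsub, Pi.sub_apply, hPx, hQx,
    expVolterra_congr_ae (hQ f), expVolterra_const_mul, smul_eq_mul]
  rw [eq_div_of_mul_eq (sub_ne_zero.2 hab) ((mul_comm _ _).trans hcomp)]
  ring

theorem resolvent {𝕀 : Lp ℂ 2 (muI l) →L[ℂ] Lp ℂ 2 (muI l)}
    (h𝕀 : HasExpVolterraKernel l 0 𝕀) {z : ℂ} (hz : z ≠ 0) :
    IsUnit (𝕀 - z • 1) ∧ ∀ f : Lp ℂ 2 (muI l),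
      (Ring.inverse (𝕀 - z • 1) f : ℝ → ℂ) =ᵐ[muI l]
        fun x => -(1 / z) * f x - (I / z ^ 2) * expVolterra l (I / z) f x := by
  set A := expMul l (-(I / z)) ∘L 𝕀 ∘L expMul l (I / z)
  have hA : HasExpVolterraKernel l (I / z) A := by simpa using h𝕀.conj_expMul (I / z)
  have hc : I / z ≠ 0 := div_ne_zero I_ne_zero hz
  have h𝕀A : 𝕀 * A = z • (A - 𝕀) := by
    rw [h𝕀.mul_eq hA hc.symm, show I / (0 - I / z) = -z by field_simp; ring, neg_smul,
      ← smul_neg, neg_sub]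
  have hA𝕀 : A * 𝕀 = z • (A - 𝕀) := by
    rw [hA.mul_eq h𝕀 hc, show I / (I / z - 0) = z by field_simp; ring]
  obtain ⟨hu, hinv⟩ := isUnit_sub_smul_one_of_mul_eq hz h𝕀A hA𝕀
  refine ⟨hu, fun f => ?_⟩
  rw [hinv, sub_apply, smul_apply, smul_apply, one_apply_eq_self]
  filter_upwards [Lp.coeFn_sub (-z⁻¹ • f) (z⁻¹ ^ 2 • A f), Lp.coeFn_smul (-z⁻¹) f,
    Lp.coeFn_smul (z⁻¹ ^ 2) (A f), hA f] with x hsub hsmul₁ hsmul₂ hAx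
  rw [hsub, Pi.sub_apply, hsmul₁, hsmul₂, Pi.smul_apply, Pi.smul_apply, hAx, smul_eq_mul,
    smul_eq_mul]
  ring

end HasExpVolterraKernel

theorem one_sub_inner_eq_exp (hl : 0 < l) {z : ℂ} (hz : z ≠ 0)
    {R : Lp ℂ 2 (muI l) →L[ℂ] Lp ℂ 2 (muI l)}
    (hR : ∀ f : Lp ℂ 2 (muI l), (R f : ℝ → ℂ) =ᵐ[muI l]
      fun x => -(1 / z) * f x - (I / z ^ 2) * expVolterra l (I / z) f x)
    {h0 : Lp ℂ 2 (muI l)} (hh0 : ∀ᵐ x ∂(muI l), (h0 : ℝ → ℂ) x = ((1 / Real.sqrt l : ℝ) : ℂ)) :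
    1 - I * l * inner ℂ h0 (R h0) = exp (I * l / z) := by
  set k : ℂ := ((1 / Real.sqrt l : ℝ) : ℂ)
  have hc : I / z ≠ 0 := div_ne_zero I_ne_zero hz
  have hk : k ^ 2 = 1 / l := by
    rw [← ofReal_pow, div_pow, one_pow, Real.sq_sqrt hl.le, ofReal_div, ofReal_one]
  have hkconj : (starRingEnd ℂ) k = k := conj_ofReal _
  have hpt : ∀ᵐ x ∂(muI l), inner ℂ (h0 x) (R h0 x) =
      -(k ^ 2 / z) * exp (I / z * l) * exp (-(I / z) * x) := by
    filter_upwards [hR h0, hh0, ae_restrict_mem measurableSet_Ioo] with x hRx hx0 hx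
    rw [hRx, hx0, expVolterra_congr_ae hh0, expVolterra_const hc _ hx.1.le hx.2.le]
    simp only [RCLike.inner_apply, hkconj]
    rw [show I / z * (l - x) = I / z * l + -(I / z) * x by ring, exp_add]
    field_simp
    ring
  have hwhole : ∫ x, exp (-(I / z) * x) ∂(muI l) =
      ∫ x in Ioo 0 l, exp (-(I / z) * x) ∂(muI l) := by
    rw [restrict_muI_of_subset subset_rfl]
    rfl
  have hinv : exp (-(I / z) * l) = (exp (I / z * l))⁻¹ := by rw [neg_mul, exp_neg]
  rw [L2.inner_def, integral_congr_ae hpt, integral_const_mul, hwhole,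
    integral_Ioo_muI_exp (neg_ne_zero.2 hc) le_rfl hl.le le_rfl, hk,
    show I * l / z = I / z * l by ring, hinv, ofReal_zero, mul_zero, exp_zero]
  have hl0 : (l : ℂ) ≠ 0 := ofReal_ne_zero.2 hl.ne'
  field_simp
  ring

/-- Spectrum and resolvent of the integration operator `(𝕀 f)(x) = i ∫_x^l f(t) dt` on
`L²(0, l)`: the spectrum is `{0}`; for `z ≠ 0` the operator `𝕀 - z` is invertible with the
explicit resolvent kernel; and for the normalized constant function `h0 ≡ 1/√l` one has
`1 - i l ⟨(𝕀 - z)⁻¹ h0, h0⟩ = e^{i l / z}`. -/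
theorem statement16
    (l : ℝ) (hl : 0 < l)
    (𝕀 : Lp ℂ 2 (muI l) →L[ℂ] Lp ℂ 2 (muI l))
    (h𝕀 : ∀ f : Lp ℂ 2 (muI l), ∀ᵐ x ∂(muI l),
      (𝕀 f : ℝ → ℂ) x = Complex.I * ∫ t in Set.Ioi x, (f : ℝ → ℂ) t ∂(muI l))
    (h0 : Lp ℂ 2 (muI l))
    (hh0 : ∀ᵐ x ∂(muI l), (h0 : ℝ → ℂ) x = ((1 / Real.sqrt l : ℝ) : ℂ)) :
    spectrum ℂ 𝕀 = {0} ∧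
    ∀ z : ℂ, z ≠ 0 →
      IsUnit (𝕀 - z • (1 : Lp ℂ 2 (muI l) →L[ℂ] Lp ℂ 2 (muI l))) ∧
      (∀ f : Lp ℂ 2 (muI l), ∀ᵐ x ∂(muI l),
        (Ring.inverse (𝕀 - z • (1 : Lp ℂ 2 (muI l) →L[ℂ] Lp ℂ 2 (muI l))) f : ℝ → ℂ) x =
          -(1 / z) * (f : ℝ → ℂ) x -
            (Complex.I / z ^ 2) *
              ∫ t in Set.Ioi x,
                Complex.exp (Complex.I / z * ((t : ℂ) - (x : ℂ))) * (f : ℝ → ℂ) t ∂(muI l)) ∧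
      1 - Complex.I * (l : ℂ) *
          (inner ℂ h0 (Ring.inverse (𝕀 - z • (1 : Lp ℂ 2 (muI l) →L[ℂ] Lp ℂ 2 (muI l))) h0) : ℂ) =
        Complex.exp (Complex.I * (l : ℂ) / z) := by
  have hres := fun z (hz : z ≠ 0) => (hasExpVolterraKernel_zero h𝕀).resolvent hz
  have : Nontrivial (Lp ℂ 2 (muI l)) :=
    nontrivial_of_ne h0 0 <|
      Lp.ne_zero_of_ae_eq_const (muI_ne_zero hl) (ofReal_ne_zero.2 (by positivity)) hh0
  exact ⟨spectrum_eq_singleton_zero_of_isUnit fun z hz => (hres z hz).1, fun z hz =>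
    ⟨(hres z hz).1, (hres z hz).2, one_sub_inner_eq_exp hl hz (hres z hz).2 hh0⟩⟩
end
end
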